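/- arXiv:0807.1078 — 5 statements merged into one kernel-verified Lean document; each statement's English description precedes it below -/
import Mathlib

section
/- For every integer b ≥ 1 and every power series h ∈ 1 + π·E[[π]] there exists a unique g ∈ 1 + π·E[[π]] such that φ^b(g) = h·g. Moreover, for any real number c > 0, g lies in R_{c,E} if and only if h lies in R_{c,E}; in particular, g has coefficients in O_E if and only if h has coefficients in O_E. -/
/-!
Iterating `φ` is substitution of `Q = (1 + π)^(p^b) - 1`, so comparing coefficients of `π^n` in
`φ^b(g) = h * g` gives `(p^(bn) - 1) g_n = ∑_{k<n} (h_{n-k} - [π^n] Q^k) g_k`. For `n ≥ 1` the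
factor `p^(bn) - 1` has valuation `0` and `Q` has integral coefficients, so this triangular system
has a unique solution with `g_0 = 1`, and it carries the bound `ord a_s ≥ -s/c` from `h` to `g`.
Conversely `h` is `φ^b(g)` divided by `g`, and both substitution of `Q` and division by a series
with constant term `1` preserve that bound.
-/

open PowerSeries

namespace AddValuation

variable {R Γ₀ : Type*} [Ring R] [LinearOrderedAddCommMonoidWithTop Γ₀]
  (v : AddValuation R Γ₀)

theorem map_natCast_nonneg (n : ℕ) : 0 ≤ v n := by
  induction n with
  | zero => simp
  | succ n ih => exact Nat.cast_succ (R := R) n ▸ v.map_le_add ih v.map_one.ge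

theorem map_intCast_nonneg (n : ℤ) : 0 ≤ v n := by
  cases n with
  | ofNat n => simpa using v.map_natCast_nonneg n
  | negSucc n => rw [Int.cast_negSucc, v.map_neg]; exact_mod_cast v.map_natCast_nonneg (n + 1)

theorem map_pow_sub_one {x : R} (hx : 0 < v x) {n : ℕ} (hn : n ≠ 0) : v (x ^ n - 1) = 0 := by
  rw [v.map_sub_eq_of_lt_right (by rw [v.map_one, v.map_pow]; exact nsmul_pos hx hn), v.map_one]

end AddValuation

section TriangularRec

variable {R : Type*} [Semiring R]

def triangularRec (c : ℕ → ℕ → R) : ℕ → R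
  | 0 => 1
  | n + 1 => ∑ k : Fin (n + 1), c (n + 1) k * triangularRec c k

theorem triangularRec_of_pos (c : ℕ → ℕ → R) {n : ℕ} (hn : 0 < n) :
    triangularRec c n = ∑ k ∈ Finset.range n, c n k * triangularRec c k := by
  obtain ⟨n, rfl⟩ := Nat.exists_eq_add_of_lt hn
  rw [zero_add, triangularRec,
    Fin.sum_univ_eq_sum_range (fun k => c (n + 1) k * triangularRec c k)]

end TriangularRec

namespace PowerSeries

section CommRing

variable {R : Type*} [CommRing R]

theorem coeff_mul_eq_add_sum (f g : R⟦X⟧) (n : ℕ) :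
    coeff n (f * g) =
      coeff n f * coeff 0 g + ∑ k ∈ Finset.range n, coeff k f * coeff (n - k) g := by
  rw [coeff_mul, Finset.Nat.sum_antidiagonal_eq_sum_range_succ_mk, Finset.sum_range_succ,
    Nat.sub_self, add_comm]

theorem coeff_pow_self_of_constantCoeff_eq_zero {f : R⟦X⟧} (hf : constantCoeff f = 0)
    (n : ℕ) : coeff n (f ^ n) = coeff 1 f ^ n := by
  obtain ⟨u, rfl⟩ := X_dvd_iff.mpr hf
  rw [mul_pow, coeff_X_pow_mul', if_pos le_rfl, Nat.sub_self, coeff_zero_eq_constantCoeff,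
    map_pow, coeff_succ_X_mul, coeff_zero_eq_constantCoeff]

theorem coeff_one_add_X_pow_sub_one_pow (N k n : ℕ) :
    coeff n (((1 + X : R⟦X⟧) ^ N - 1) ^ k) =
      ((coeff n (((1 + X : ℤ⟦X⟧) ^ N - 1) ^ k) : ℤ) : R) := by
  rw [← eq_intCast (Int.castRingHom R), ← coeff_map]
  simp

theorem coeff_one_one_add_X_pow_sub_one (N : ℕ) :
    coeff 1 ((1 + X : R⟦X⟧) ^ N - 1) = (N : R) := by
  have : (1 + X : R⟦X⟧) ^ N = (((1 + Polynomial.X) ^ N : Polynomial R) : R⟦X⟧) := by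
    push_cast; rfl
  rw [map_sub, this, Polynomial.coeff_coe, Polynomial.coeff_one_add_X_pow, coeff_one]
  simp

def IsSubstMap (σ : R⟦X⟧ → R⟦X⟧) (Q : R⟦X⟧) : Prop :=
  ∀ (f : R⟦X⟧) (n : ℕ),
    coeff n (σ f) = ∑ k ∈ Finset.range (n + 1), coeff k f * coeff n (Q ^ k)

def CoeffContinuous (φ : R⟦X⟧ →+* R⟦X⟧) : Prop :=
  ∀ (f : R⟦X⟧) (n : ℕ), coeff n (φ f) = coeff n (φ (trunc (n + 1) f))

namespace CoeffContinuous

variable {φ ψ : R⟦X⟧ →+* R⟦X⟧}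

theorem trunc_map (hφ : CoeffContinuous φ) (f : R⟦X⟧) (n : ℕ) :
    trunc n (φ f) = trunc n (φ (trunc n f)) := by
  ext m
  simp only [coeff_trunc]
  split_ifs with hm
  · rw [hφ, hφ (trunc n f : R⟦X⟧), trunc_trunc_of_le f hm]
  · rfl

theorem comp (hφ : CoeffContinuous φ) (hψ : CoeffContinuous ψ) :
    CoeffContinuous (ψ.comp φ) := fun f n => by
  rw [RingHom.comp_apply, RingHom.comp_apply, hψ, hφ.trunc_map, ← hψ]

theorem pow (hφ : CoeffContinuous φ) (m : ℕ) : CoeffContinuous (φ ^ m) := by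
  induction m with
  | zero => intro f n; simp [coeff_trunc]
  | succ m ih => rw [pow_succ, RingHom.mul_def]; exact hφ.comp ih

theorem isSubstMap (hφ : CoeffContinuous φ) (hC : ∀ c : R, φ (C c) = C c) :
    IsSubstMap φ (φ X) := fun f n => by
  rw [hφ, trunc_apply, ← Finset.range_eq_Ico, ← Polynomial.coeToPowerSeries.ringHom_apply]
  simp only [map_sum, Polynomial.coeToPowerSeries.ringHom_apply, Polynomial.coe_monomial,
    monomial_eq_C_mul_X_pow, map_mul, map_pow, hC, coeff_C_mul]

end CoeffContinuous

theorem pow_map_X {φ : R⟦X⟧ →+* R⟦X⟧} {p : ℕ} (hX : φ X = (1 + X) ^ p - 1) (m : ℕ) :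
    (φ ^ m) X = (1 + X) ^ (p ^ m) - 1 := by
  induction m with
  | zero => simp
  | succ m ih =>
    rw [pow_succ', RingHom.mul_def, RingHom.comp_apply, ih, map_sub, map_pow, map_add, map_one,
      hX, add_sub_cancel, ← pow_mul, ← pow_succ']

theorem CoeffContinuous.isSubstMap_pow {φ : R⟦X⟧ →+* R⟦X⟧} (hφ : CoeffContinuous φ)
    (hC : ∀ c : R, φ (C c) = C c) {p : ℕ} (hX : φ X = (1 + X) ^ p - 1) (m : ℕ) :
    IsSubstMap (φ ^ m) ((1 + X) ^ (p ^ m) - 1) := by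
  rw [← pow_map_X hX m]
  exact (hφ.pow m).isSubstMap fun c => by rw [RingHom.coe_pow, Function.iterate_fixed (hC c)]

end CommRing

section Field

variable {K : Type*} [Field K] {σ : K⟦X⟧ → K⟦X⟧} {Q h g : K⟦X⟧}

theorem IsSubstMap.eq_mul_iff (hσ : IsSubstMap σ Q) (hQ : constantCoeff Q = 0)
    (hh : constantCoeff h = 1) :
    σ g = h * g ↔ ∀ n, (coeff 1 Q ^ n - 1) * coeff n g =
      ∑ k ∈ Finset.range n, (coeff (n - k) h - coeff n (Q ^ k)) * coeff k g := by
  have key : ∀ n, coeff n (σ g - h * g) = (coeff 1 Q ^ n - 1) * coeff n g -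
      ∑ k ∈ Finset.range n, (coeff (n - k) h - coeff n (Q ^ k)) * coeff k g := by
    intro n
    rw [map_sub, hσ, Finset.sum_range_succ, coeff_pow_self_of_constantCoeff_eq_zero hQ,
      mul_comm h, coeff_mul_eq_add_sum, coeff_zero_eq_constantCoeff, hh]
    simp only [sub_mul, Finset.sum_sub_distrib, mul_comm (coeff _ g)]
    ring
  rw [← sub_eq_zero, PowerSeries.ext_iff]
  simp only [key, map_zero, sub_eq_zero]

theorem IsSubstMap.eq_of_eq_mul (hσ : IsSubstMap σ Q) (hQ : constantCoeff Q = 0)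
    (hQ₁ : ∀ n, n ≠ 0 → coeff 1 Q ^ n ≠ 1) (hh : constantCoeff h = 1) {g g' : K⟦X⟧}
    (hg₀ : constantCoeff g = 1) (hg : σ g = h * g)
    (hg'₀ : constantCoeff g' = 1) (hg' : σ g' = h * g') : g = g' := by
  rw [hσ.eq_mul_iff hQ hh] at hg hg'
  ext n
  induction n using Nat.strong_induction_on with | _ n ih =>
  rcases n.eq_zero_or_pos with rfl | hn
  · simp [hg₀, hg'₀]
  · refine mul_left_cancel₀ (sub_ne_zero.mpr (hQ₁ n hn.ne')) ?_
    rw [hg n, hg' n]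
    exact Finset.sum_congr rfl fun k hk => by rw [ih k (Finset.mem_range.mp hk)]

theorem IsSubstMap.existsUnique_eq_mul (hσ : IsSubstMap σ Q) (hQ : constantCoeff Q = 0)
    (hQ₁ : ∀ n, n ≠ 0 → coeff 1 Q ^ n ≠ 1) (hh : constantCoeff h = 1) :
    ∃! g : K⟦X⟧, constantCoeff g = 1 ∧ σ g = h * g := by
  refine existsUnique_of_exists_of_unique ?_ fun g g' ⟨hg₀, hg⟩ ⟨hg'₀, hg'⟩ =>
    hσ.eq_of_eq_mul hQ hQ₁ hh hg₀ hg hg'₀ hg'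
  refine ⟨mk (triangularRec fun n k =>
      (coeff 1 Q ^ n - 1)⁻¹ * (coeff (n - k) h - coeff n (Q ^ k))),
    by simp [triangularRec], (hσ.eq_mul_iff hQ hh).mpr fun n => ?_⟩
  rcases n.eq_zero_or_pos with rfl | hn
  · simp
  · rw [coeff_mk, triangularRec_of_pos _ hn, Finset.mul_sum]
    refine Finset.sum_congr rfl fun k _ => ?_
    rw [coeff_mk, ← mul_assoc, mul_inv_cancel_left₀ (sub_ne_zero.mpr (hQ₁ n hn.ne'))]

/-- `R_{c,E}` is `{f | CoeffGrowthLE v c⁻¹ f}`; series over the valuation ring are those with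
`CoeffGrowthLE v 0 f`. -/
def CoeffGrowthLE (v : AddValuation K (WithTop ℝ)) (t : ℝ) (f : K⟦X⟧) : Prop :=
  ∀ s : ℕ, ((-(s * t) : ℝ) : WithTop ℝ) ≤ v (coeff s f)

section CoeffGrowthLE

variable {v : AddValuation K (WithTop ℝ)} {t : ℝ}

private theorem weight_add {k n : ℕ} (hkn : k ≤ n) :
    ((-(k * t) : ℝ) : WithTop ℝ) + ((-((n - k : ℕ) * t) : ℝ) : WithTop ℝ) =
      ((-(n * t) : ℝ) : WithTop ℝ) := by
  rw [← WithTop.coe_add, Nat.cast_sub hkn]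
  congr 1
  ring

private theorem weight_le (ht : 0 ≤ t) {k n : ℕ} (hkn : k ≤ n) :
    ((-(n * t) : ℝ) : WithTop ℝ) ≤ ((-(k * t) : ℝ) : WithTop ℝ) := by
  have : (k : ℝ) ≤ n := by exact_mod_cast hkn
  exact WithTop.coe_le_coe.mpr (by nlinarith)

private theorem weight_nonpos (ht : 0 ≤ t) (n : ℕ) : ((-(n * t) : ℝ) : WithTop ℝ) ≤ 0 :=
  WithTop.coe_le_coe.mpr (by have := n.cast_nonneg (α := ℝ); nlinarith)

theorem CoeffGrowthLE.of_mul (hg₀ : constantCoeff g = 1) (hg : CoeffGrowthLE v t g)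
    (hhg : CoeffGrowthLE v t (h * g)) : CoeffGrowthLE v t h := by
  intro n
  induction n using Nat.strong_induction_on with | _ n ih =>
  have hn : coeff n h =
      coeff n (h * g) - ∑ k ∈ Finset.range n, coeff k h * coeff (n - k) g := by
    rw [coeff_mul_eq_add_sum, coeff_zero_eq_constantCoeff, hg₀, mul_one, add_sub_cancel_right]
  rw [hn]
  refine v.map_le_sub (hhg n) (v.map_le_sum fun k hk => ?_)
  rw [v.map_mul, ← weight_add (Finset.mem_range.mp hk).le]
  exact add_le_add (ih k (Finset.mem_range.mp hk)) (hg _)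

theorem CoeffGrowthLE.map_of_isSubstMap (ht : 0 ≤ t) (hσ : IsSubstMap σ Q)
    (hQv : ∀ n k, 0 ≤ v (coeff n (Q ^ k))) (hg : CoeffGrowthLE v t g) :
    CoeffGrowthLE v t (σ g) := by
  intro n
  rw [hσ]
  refine v.map_le_sum fun k hk => ?_
  rw [v.map_mul, ← add_zero ((-(n * t) : ℝ) : WithTop ℝ)]
  exact add_le_add ((weight_le ht (Finset.mem_range_succ_iff.mp hk)).trans (hg k)) (hQv n k)

theorem CoeffGrowthLE.of_eq_mul (ht : 0 ≤ t) (hσ : IsSubstMap σ Q)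
    (hQ : constantCoeff Q = 0) (hQv : ∀ n k, 0 ≤ v (coeff n (Q ^ k)))
    (hQ₁v : ∀ n, n ≠ 0 → v (coeff 1 Q ^ n - 1) = 0) (hh : constantCoeff h = 1)
    (hhv : CoeffGrowthLE v t h) (hg₀ : constantCoeff g = 1) (hg : σ g = h * g) :
    CoeffGrowthLE v t g := by
  rw [hσ.eq_mul_iff hQ hh] at hg
  intro n
  induction n using Nat.strong_induction_on with | _ n ih =>
  rcases n.eq_zero_or_pos with rfl | hn
  · simp [hg₀]
  have hvn : v (coeff n g) =
      v (∑ k ∈ Finset.range n, (coeff (n - k) h - coeff n (Q ^ k)) * coeff k g) := by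
    rw [← hg n, v.map_mul, hQ₁v n hn.ne', zero_add]
  rw [hvn]
  refine v.map_le_sum fun k hk => ?_
  have hkn := Finset.mem_range.mp hk
  rw [v.map_mul, ← weight_add hkn.le, add_comm]
  exact add_le_add (v.map_le_sub (hhv _) ((weight_nonpos ht _).trans (hQv n k))) (ih k hkn)

theorem IsSubstMap.coeffGrowthLE_iff (ht : 0 ≤ t) (hσ : IsSubstMap σ Q)
    (hQ : constantCoeff Q = 0) (hQv : ∀ n k, 0 ≤ v (coeff n (Q ^ k)))
    (hQ₁v : ∀ n, n ≠ 0 → v (coeff 1 Q ^ n - 1) = 0) (hh : constantCoeff h = 1)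
    (hg₀ : constantCoeff g = 1) (hg : σ g = h * g) :
    CoeffGrowthLE v t g ↔ CoeffGrowthLE v t h :=
  ⟨fun hgv => .of_mul hg₀ hgv (hg ▸ hgv.map_of_isSubstMap ht hσ hQv),
    fun hhv => .of_eq_mul ht hσ hQ hQv hQ₁v hh hhv hg₀ hg⟩

end CoeffGrowthLE

end Field

end PowerSeries

theorem stmt5_general
    (p : ℕ) [Fact (Nat.Prime p)]
    (E : Type*) [Field E] [Algebra ℚ_[p] E]
    -- the p-adic valuation on E …
    (ord : E → WithTop ℝ)
    (hord0 : ∀ x : E, ord x = ⊤ ↔ x = 0)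
    (hordmul : ∀ x y : E, ord (x * y) = ord x + ord y)
    (hordadd : ∀ x y : E, min (ord x) (ord y) ≤ ord (x + y))
    (hordext : ∀ x : ℚ_[p], x ≠ 0 →
      ord (algebraMap ℚ_[p] E x) = ((x.valuation : ℝ) : WithTop ℝ))
    -- … and its ring of integers
    (OE : Subring E) (hOE : ∀ x : E, x ∈ OE ↔ 0 ≤ ord x)
    -- φ : the E-linear ring endomorphism of E[[π]] with φ(π) = (1+π)^p − 1
    (φ : PowerSeries E →+* PowerSeries E)
    (hφC : ∀ c : E, φ (C c) = C c)
    (hφX : φ X = (1 + X) ^ p - 1)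
    (hφcont : ∀ (f : PowerSeries E) (n : ℕ),
      coeff n (φ f) = coeff n (φ ((trunc (n + 1) f : Polynomial E) : PowerSeries E)))
    -- the statement
    (b : ℕ) (hb : 1 ≤ b)
    (h : PowerSeries E) (hh : constantCoeff h = 1) :
    (∃! g : PowerSeries E, constantCoeff g = 1 ∧ (⇑φ)^[b] g = h * g) ∧
    (∀ g : PowerSeries E, constantCoeff g = 1 → (⇑φ)^[b] g = h * g →
      ((∀ c : ℝ, 0 < c →
        ((∀ s : ℕ, ((-(s / c) : ℝ) : WithTop ℝ) ≤ ord (coeff s g)) ↔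
         (∀ s : ℕ, ((-(s / c) : ℝ) : WithTop ℝ) ≤ ord (coeff s h)))) ∧
       ((∀ s : ℕ, coeff s g ∈ OE) ↔ (∀ s : ℕ, coeff s h ∈ OE)))) := by
  let v : AddValuation E (WithTop ℝ) :=
    .of ord ((hord0 0).mpr rfl) (by simpa using hordext 1 one_ne_zero) hordadd hordmul
  set Q : E⟦X⟧ := (1 + X) ^ (p ^ b) - 1
  have hσ : IsSubstMap (φ ^ b) Q := CoeffContinuous.isSubstMap_pow hφcont hφC hφX b
  have hQ : constantCoeff Q = 0 := by simp [Q]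
  have hQv : ∀ n k, 0 ≤ v (coeff n (Q ^ k)) := fun n k => by
    rw [coeff_one_add_X_pow_sub_one_pow]
    exact v.map_intCast_nonneg _
  have hpv : 0 < v ((p : E) ^ b) := by
    have hp : v p = 1 := by
      simpa [v] using hordext p (Nat.cast_ne_zero.mpr (Fact.out : p.Prime).ne_zero)
    rw [v.map_pow, hp]
    exact nsmul_pos (by norm_num) (by omega)
  have hQ₁v : ∀ n, n ≠ 0 → v (coeff 1 Q ^ n - 1) = 0 := fun n hn => by
    rw [coeff_one_one_add_X_pow_sub_one, Nat.cast_pow]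
    exact v.map_pow_sub_one hpv hn
  have hQ₁ : ∀ n, n ≠ 0 → coeff 1 Q ^ n ≠ 1 := fun n hn h1 => by
    simpa [h1] using hQ₁v n hn
  rw [← RingHom.coe_pow]
  refine ⟨hσ.existsUnique_eq_mul hQ hQ₁ hh, fun g hg₀ hg => ⟨fun c hc => ?_, ?_⟩⟩
  · simpa [CoeffGrowthLE, v, div_eq_mul_inv] using
      hσ.coeffGrowthLE_iff (inv_nonneg.mpr hc.le) hQ hQv hQ₁v hh hg₀ hg
  · simpa [CoeffGrowthLE, v, hOE] using hσ.coeffGrowthLE_iff le_rfl hQ hQv hQ₁v hh hg₀ hg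

theorem stmt5
    (p : ℕ) [Fact (Nat.Prime p)]
    (E : Type*) [Field E] [Algebra ℚ_[p] E] [FiniteDimensional ℚ_[p] E]
    -- the p-adic valuation on E …
    (ord : E → WithTop ℝ)
    (hord0 : ∀ x : E, ord x = ⊤ ↔ x = 0)
    (hordmul : ∀ x y : E, ord (x * y) = ord x + ord y)
    (hordadd : ∀ x y : E, min (ord x) (ord y) ≤ ord (x + y))
    (hordext : ∀ x : ℚ_[p], x ≠ 0 →
      ord (algebraMap ℚ_[p] E x) = ((x.valuation : ℝ) : WithTop ℝ))
    -- … and its ring of integers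
    (OE : Subring E) (hOE : ∀ x : E, x ∈ OE ↔ 0 ≤ ord x)
    -- φ : the E-linear ring endomorphism of E[[π]] with φ(π) = (1+π)^p − 1
    (φ : PowerSeries E →+* PowerSeries E)
    (hφC : ∀ c : E, φ (C c) = C c)
    (hφX : φ X = (1 + X) ^ p - 1)
    (hφcont : ∀ (f : PowerSeries E) (n : ℕ),
      coeff n (φ f) = coeff n (φ ((trunc (n + 1) f : Polynomial E) : PowerSeries E)))
    -- the statement
    (b : ℕ) (hb : 1 ≤ b)
    (h : PowerSeries E) (hh : constantCoeff h = 1) :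
    (∃! g : PowerSeries E, constantCoeff g = 1 ∧ (⇑φ)^[b] g = h * g) ∧
    (∀ g : PowerSeries E, constantCoeff g = 1 → (⇑φ)^[b] g = h * g →
      ((∀ c : ℝ, 0 < c →
        ((∀ s : ℕ, ((-(s / c) : ℝ) : WithTop ℝ) ≤ ord (coeff s g)) ↔
         (∀ s : ℕ, ((-(s / c) : ℝ) : WithTop ℝ) ≤ ord (coeff s h)))) ∧
       ((∀ s : ℕ, coeff s g ∈ OE) ↔ (∀ s : ℕ, coeff s h ∈ OE)))) :=
  stmt5_general p E ord hord0 hordmul hordadd hordext OE hOE φ hφC hφX hφcont b hb h hh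
end

section
/- Suppose given, for each j ∈ Z/aZ, a diagonal matrix Ĝ_j ∈ Id + π·M_{d×d}(O_E[[π]]) and a matrix A_j ∈ M_{d×d}(O_E) with ord_p(A_j) = 0. Then there exists a unique family (Â_j)_{j∈Z/aZ} of matrices in M_{d×d}(E[[π]]) with Â_j ≡ A_j mod π such that, setting P̂_j := Â_j·Δ̂_{k_j}, one has Ĝ_{j−1}·γ(P̂_j) = P̂_j·φ(Ĝ_j) for all j ∈ Z/aZ. Moreover, for every n ≥ 0 the π^n-coefficient of each Â_j lies in β_{γ,n}^{−1}·M_{d×d}(O_E), and if in addition ord_p(β_{γ,n}) ≤ ⌊n·p/(p−1)²⌋ for all n ≥ 1, then each Â_j lies in M_{d×d}(R_{(p−1)²/p, E}). -/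
/-!
Since the `Ĝ_j` are diagonal and `γ(q) = q·u` with `u ≡ 1 mod π`, the matrix equation splits
entrywise into scalar equations `H₁ · γ(f) = H₂ · f` with `H₁ = Ĝ_{j-1,ii} u^{k_{j,i'}}` and
`H₂ = φ(Ĝ_{j,i'i'})`, both `≡ 1 mod π`. As `γ(π) ≡ χ π mod π²`, the `π^n`-coefficient of
`H₁ γ(f) - H₂ f` is `(χ^n - 1) f_n + Σ_{m<n} f_m c_{n,m}` with `c_{n,m}` integral. Since
`χ^n ≠ 1`, this triangular system has exactly one solution with prescribed `f_0`, and induction on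
`n` shows `β_n f_n` is integral; the growth bound is then read off from `ord β_n`.
-/

namespace PowerSeries

open Finset

section CommRing

variable {R : Type*} [CommRing R]

def coeffsIn (S : Subring R) : Subring R⟦X⟧ where
  carrier := {f | ∀ n, coeff n f ∈ S}
  mul_mem' {f g} hf hg n := by
    rw [coeff_mul]
    exact sum_mem fun x _ => S.mul_mem (hf _) (hg _)
  one_mem' n := by rw [coeff_one]; split_ifs <;> simp [S.one_mem, S.zero_mem]
  add_mem' hf hg n := by rw [map_add]; exact S.add_mem (hf n) (hg n)
  zero_mem' n := by simp [S.zero_mem]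
  neg_mem' hf n := by rw [map_neg]; exact S.neg_mem (hf n)

theorem X_mem_coeffsIn (S : Subring R) : X ∈ coeffsIn S := fun n => by
  rw [coeff_X]; split_ifs <;> simp [S.one_mem, S.zero_mem]

theorem one_add_X_pow_sub_one_mem_coeffsIn (S : Subring R) (n : ℕ) :
    (1 + X) ^ n - 1 ∈ coeffsIn S :=
  (coeffsIn S).sub_mem
    ((coeffsIn S).pow_mem ((coeffsIn S).add_mem (coeffsIn S).one_mem (X_mem_coeffsIn S)) n)
    (coeffsIn S).one_mem

theorem coeff_one_add_X_pow (n k : ℕ) : coeff k ((1 + X : R⟦X⟧) ^ n) = n.choose k := by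
  rw [← Polynomial.coeff_one_add_X_pow R, ← Polynomial.coeff_coe]
  push_cast
  rfl

theorem ne_zero_of_X_mul_eq_one_add_X_pow_sub_one [CharZero R] {q : R⟦X⟧} {n : ℕ}
    (hn : n ≠ 0) (h : X * q = (1 + X) ^ n - 1) : q ≠ 0 := by
  rintro rfl
  simpa [coeff_one_add_X_pow, coeff_one, eq_comm, hn] using congrArg (coeff 1) h

theorem coe_trunc_eq_sum_range (f : R⟦X⟧) (n : ℕ) :
    (trunc n f : R⟦X⟧) = ∑ m ∈ range n, C (coeff m f) * X ^ m := by
  ext j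
  simp [coeff_trunc, coeff_X_pow]

theorem coeff_mul_endo_eq_sum (ψ : R⟦X⟧ →+* R⟦X⟧) (hψC : ∀ c, ψ (C c) = C c)
    (hψX : constantCoeff (ψ X) = 0) (H f : R⟦X⟧) (n : ℕ) :
    coeff n (H * ψ f) = ∑ m ∈ range (n + 1), coeff m f * coeff n (H * ψ X ^ m) := by
  have hsplit := eq_X_pow_mul_shift_add_trunc (n + 1) f
  set g := mk fun i ↦ coeff (i + (n + 1)) f
  have hhigh : coeff n (H * ψ (X ^ (n + 1) * g)) = 0 := by
    refine X_pow_dvd_iff.1 ?_ n n.lt_succ_self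
    rw [map_mul, map_pow]
    exact ((pow_dvd_pow_of_dvd (X_dvd_iff.2 hψX) _).mul_right _).mul_left _
  conv_lhs => rw [hsplit, map_add, mul_add, map_add, hhigh, zero_add, coe_trunc_eq_sum_range,
    map_sum, mul_sum, map_sum]
  refine sum_congr rfl fun m _ => ?_
  rw [ψ.map_mul, hψC, ψ.map_pow, mul_left_comm, coeff_C_mul]

theorem constantCoeff_endo (ψ : R⟦X⟧ →+* R⟦X⟧) (hψC : ∀ c, ψ (C c) = C c)
    (hψX : constantCoeff (ψ X) = 0) (f : R⟦X⟧) : constantCoeff (ψ f) = constantCoeff f := by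
  simpa using coeff_mul_endo_eq_sum ψ hψC hψX 1 f 0

theorem endo_mem_coeffsIn (ψ : R⟦X⟧ →+* R⟦X⟧) (hψC : ∀ c, ψ (C c) = C c)
    (hψX : constantCoeff (ψ X) = 0) {S : Subring R} (hψS : ψ X ∈ coeffsIn S) {f : R⟦X⟧}
    (hf : f ∈ coeffsIn S) : ψ f ∈ coeffsIn S := fun n => by
  have h := coeff_mul_endo_eq_sum ψ hψC hψX 1 f n
  rw [one_mul] at h
  rw [h]
  exact sum_mem fun m _ => S.mul_mem (hf m) (by simpa using (coeffsIn S).pow_mem hψS m n)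

theorem coeff_mul_endo_X_pow_self (ψ : R⟦X⟧ →+* R⟦X⟧) (hψX : constantCoeff (ψ X) = 0)
    (H : R⟦X⟧) (n : ℕ) : coeff n (H * ψ X ^ n) = constantCoeff H * coeff 1 (ψ X) ^ n := by
  obtain ⟨h, hh⟩ := X_dvd_iff.2 hψX
  rw [hh, mul_pow, mul_left_comm, coeff_X_pow_mul', if_pos le_rfl, Nat.sub_self,
    coeff_zero_eq_constantCoeff, map_mul, map_pow, coeff_succ_X_mul, coeff_zero_eq_constantCoeff]

theorem coeff_twisted_sub (ψ : R⟦X⟧ →+* R⟦X⟧) (hψC : ∀ c, ψ (C c) = C c)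
    (hψX : constantCoeff (ψ X) = 0) {H₁ H₂ : R⟦X⟧} (h₁ : constantCoeff H₁ = 1)
    (h₂ : constantCoeff H₂ = 1) (f : R⟦X⟧) (n : ℕ) :
    coeff n (H₁ * ψ f - H₂ * f) = (coeff 1 (ψ X) ^ n - 1) * coeff n f +
      ∑ m ∈ range n, coeff m f * coeff n (H₁ * ψ X ^ m - H₂ * X ^ m) := by
  have hid := coeff_mul_endo_eq_sum (RingHom.id _) (fun _ => rfl) constantCoeff_X H₂ f n
  have hX : coeff n (H₂ * X ^ n) = 1 := by
    simpa [h₂] using coeff_mul_endo_X_pow_self (RingHom.id _) constantCoeff_X H₂ n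
  simp only [RingHom.id_apply] at hid
  rw [map_sub, coeff_mul_endo_eq_sum ψ hψC hψX, hid, sum_range_succ, sum_range_succ,
    coeff_mul_endo_X_pow_self ψ hψX, h₁, hX]
  simp only [map_sub, mul_sub, sum_sub_distrib]
  ring

end CommRing

section Field

variable {E : Type*} [Field E] (ψ : E⟦X⟧ →+* E⟦X⟧) (H₁ H₂ : E⟦X⟧)

-- `coeff_twisted_sub` set to zero and solved for the `(n + 1)`-st coefficient
noncomputable def twistedSolCoeff (a₀ : E) : ℕ → E
  | 0 => a₀
  | n + 1 => -(coeff 1 (ψ X) ^ (n + 1) - 1)⁻¹ *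
      ∑ m : Fin (n + 1),
        twistedSolCoeff a₀ m * coeff (n + 1) (H₁ * ψ X ^ (m : ℕ) - H₂ * X ^ (m : ℕ))

noncomputable def twistedSol (a₀ : E) : E⟦X⟧ := mk (twistedSolCoeff ψ H₁ H₂ a₀)

theorem constantCoeff_twistedSol (a₀ : E) : constantCoeff (twistedSol ψ H₁ H₂ a₀) = a₀ := by
  rw [twistedSol, ← coeff_zero_eq_constantCoeff_apply, coeff_mk, twistedSolCoeff]

variable {ψ H₁ H₂} (hψC : ∀ c, ψ (C c) = C c) (hψX : constantCoeff (ψ X) = 0)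
  (hχ : ∀ n, 1 ≤ n → coeff 1 (ψ X) ^ n ≠ 1)
  (h₁ : constantCoeff H₁ = 1) (h₂ : constantCoeff H₂ = 1)
include hψC hψX h₁ h₂

include hχ in
theorem twistedSol_spec (a₀ : E) :
    H₁ * ψ (twistedSol ψ H₁ H₂ a₀) = H₂ * twistedSol ψ H₁ H₂ a₀ := by
  rw [← sub_eq_zero]
  ext n
  rw [coeff_twisted_sub ψ hψC hψX h₁ h₂, map_zero]
  rcases n with _ | n
  · simp
  · have hne : coeff 1 (ψ X) ^ (n + 1) - 1 ≠ 0 := sub_ne_zero.2 (hχ _ n.succ_pos)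
    simp only [twistedSol, coeff_mk, twistedSolCoeff, ← mul_assoc, mul_neg, mul_inv_cancel₀ hne]
    rw [Fin.sum_univ_eq_sum_range (fun m => twistedSolCoeff ψ H₁ H₂ a₀ m *
      coeff (n + 1) (H₁ * ψ X ^ m - H₂ * X ^ m))]
    ring

include hχ in
theorem eq_of_twisted {f g : E⟦X⟧} (hf : H₁ * ψ f = H₂ * f) (hg : H₁ * ψ g = H₂ * g)
    (h0 : constantCoeff f = constantCoeff g) : f = g := by
  rw [← sub_eq_zero]
  have hfg : H₁ * ψ (f - g) - H₂ * (f - g) = 0 := by rw [map_sub]; linear_combination hf - hg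
  ext n
  rw [map_zero]
  induction n using Nat.strong_induction_on with
  | _ n ih =>
    have h := coeff_twisted_sub ψ hψC hψX h₁ h₂ (f - g) n
    rw [hfg, sum_eq_zero fun m hm => by rw [ih m (mem_range.1 hm), zero_mul], add_zero,
      map_zero, eq_comm, mul_eq_zero] at h
    rcases n with _ | n
    · simp [h0]
    · exact h.resolve_left (sub_ne_zero.2 (hχ _ n.succ_pos))

theorem prod_mul_coeff_mem_of_twisted {S : Subring E} (hψS : ψ X ∈ coeffsIn S)
    (hH₁ : H₁ ∈ coeffsIn S) (hH₂ : H₂ ∈ coeffsIn S) {f : E⟦X⟧} (hf : H₁ * ψ f = H₂ * f)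
    (hf0 : constantCoeff f ∈ S) (n : ℕ) :
    (∏ t ∈ Icc 1 n, (coeff 1 (ψ X) ^ t - 1)) * coeff n f ∈ S := by
  suffices ∀ m ≤ n, (∏ t ∈ Icc 1 n, (coeff 1 (ψ X) ^ t - 1)) * coeff m f ∈ S from this n le_rfl
  have hχS : ∀ t, coeff 1 (ψ X) ^ t - 1 ∈ S := fun t => S.sub_mem (S.pow_mem (hψS 1) t) S.one_mem
  induction n with
  | zero => intro m hm; simpa [Nat.le_zero.1 hm] using hf0
  | succ n ih =>
    intro m hm
    rw [prod_Icc_succ_top n.succ_pos, mul_comm (∏ t ∈ _, _), mul_assoc]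
    rcases hm.lt_or_eq with hm | rfl
    · exact S.mul_mem (hχS _) (ih m (Nat.lt_succ_iff.1 hm))
    · have h := coeff_twisted_sub ψ hψC hψX h₁ h₂ f (n + 1)
      rw [sub_eq_zero.2 hf, map_zero, eq_comm, ← eq_neg_iff_add_eq_zero] at h
      rw [mul_left_comm, h, mul_neg, mul_sum]
      refine S.neg_mem (sum_mem fun m hm => ?_)
      rw [← mul_assoc]
      have hc : H₁ * ψ X ^ m - H₂ * X ^ m ∈ coeffsIn S :=
        sub_mem (mul_mem hH₁ (pow_mem hψS m)) (mul_mem hH₂ (pow_mem (X_mem_coeffsIn S) m))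
      exact S.mul_mem (ih m (Nat.lt_succ_iff.1 (mem_range.1 hm))) (hc _)

end Field

end PowerSeries

theorem Matrix.isDiag_mul_map_mul_diagonal_iff {A n : Type*} [CommRing A] [IsDomain A]
    [Fintype n] [DecidableEq n] (γ φ : A →+* A) {G' G : Matrix n n A} (hG' : G'.IsDiag)
    (hG : G.IsDiag) {q u : A} (hq : q ≠ 0) (hγq : γ q = q * u) (k : n → ℕ) (M : Matrix n n A) :
    G' * ((M * diagonal fun i => q ^ k i).map γ) = (M * diagonal fun i => q ^ k i) * G.map φ ↔
      ∀ i i', G' i i * u ^ k i' * γ (M i i') = φ (G i' i') * M i i' := by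
  conv_lhs => rw [← hG'.diagonal_diag, ← hG.diagonal_diag, diagonal_map (map_zero φ),
    ← Matrix.ext_iff]
  refine forall_congr' fun i => forall_congr' fun i' => ?_
  simp only [diagonal_mul, mul_diagonal, map_apply, diag_apply, map_mul, map_pow, hγq, mul_pow]
  constructor
  · exact fun h => mul_right_cancel₀ (pow_ne_zero (k i') hq) (by linear_combination h)
  · exact fun h => by linear_combination q ^ k i' * h

theorem WithTop.neg_le_of_add_nonneg {x y : WithTop ℝ} {c : ℝ} (h : 0 ≤ x + y) (hx : x ≤ c) :
    ((-c : ℝ) : WithTop ℝ) ≤ y := by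
  induction y with
  | top => exact le_top
  | coe b =>
    induction x with
    | top => exact absurd hx (by simp)
    | coe r =>
      norm_cast at h hx ⊢
      linarith

theorem range_algebraMap_comp_padicInt_le {p : ℕ} [Fact p.Prime] {E : Type*} [Field E]
    [Algebra ℚ_[p] E] {ord : E → WithTop ℝ}
    (hordext : ∀ x : ℚ_[p], x ≠ 0 →
      ord (algebraMap ℚ_[p] E x) = ((x.valuation : ℝ) : WithTop ℝ))
    {OE : Subring E} (hOE : ∀ x : E, x ∈ OE ↔ 0 ≤ ord x) :
    ((algebraMap ℚ_[p] E).comp (PadicInt.Coe.ringHom (p := p))).range ≤ OE := by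
  rintro _ ⟨y, rfl⟩
  change algebraMap ℚ_[p] E (y : ℚ_[p]) ∈ OE
  rcases eq_or_ne (y : ℚ_[p]) 0 with hy | hy
  · rw [hy, map_zero]
    exact OE.zero_mem
  · rw [hOE, hordext _ hy]
    exact_mod_cast Nat.zero_le _

open PowerSeries

theorem stmt16
    (p : ℕ) [Fact (Nat.Prime p)]
    (E : Type*) [Field E] [Algebra ℚ_[p] E]
    (ord : E → WithTop ℝ)
    (hordmul : ∀ x y : E, ord (x * y) = ord x + ord y)
    (hordext : ∀ x : ℚ_[p], x ≠ 0 →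
      ord (algebraMap ℚ_[p] E x) = ((x.valuation : ℝ) : WithTop ℝ))
    (OE : Subring E) (hOE : ∀ x : E, x ∈ OE ↔ 0 ≤ ord x)
    (Zp' : Subring E)
    (hZp' : Zp' = ((algebraMap ℚ_[p] E).comp (PadicInt.Coe.ringHom (p := p))).range)
    (φ : PowerSeries E →+* PowerSeries E)
    (hφC : ∀ c : E, φ (C c) = C c)
    (hφX : φ X = (1 + X) ^ p - 1)
    (qq : PowerSeries E) (hqq : X * qq = (1 + X) ^ p - 1)
    (γ : PowerSeries E →+* PowerSeries E)
    (hγC : ∀ c : E, γ (C c) = C c)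
    (hγX0 : constantCoeff (γ X) = 0)
    (hγXZp : ∀ n, coeff n (γ X) ∈ Zp')
    (χ : ℤ_[p]ˣ) (hχ : ∀ n : ℕ, 1 ≤ n → ((χ : ℤ_[p]) : ℚ_[p]) ^ n ≠ 1)
    (hγX1 : coeff 1 (γ X) = algebraMap ℚ_[p] E ((χ : ℤ_[p]) : ℚ_[p]))
    (hγq : ∃ u : PowerSeries E, constantCoeff u = 1 ∧ (∀ n, coeff n u ∈ Zp') ∧
      γ qq = qq * u)
    -- the embedded Hodge polygon
    (a : ℕ) (d : ℕ)
    (k : ZMod a → Fin d → ℕ)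
    -- the diagonal matrices Ĝ_j ∈ Id + π·M_{d×d}(O_E[[π]])
    (G : ZMod a → Matrix (Fin d) (Fin d) (PowerSeries E))
    (hGdiag : ∀ j i i', i ≠ i' → G j i i' = 0)
    (hGint : ∀ j i i', ∀ l : ℕ, coeff l (G j i i') ∈ OE)
    (hG0 : ∀ j i i', constantCoeff (G j i i') = if i = i' then (1 : E) else 0)
    -- the matrices A_j ∈ M_{d×d}(O_E) with ord_p(A_j) = 0
    (A : ZMod a → Matrix (Fin d) (Fin d) E)
    (hAint : ∀ j i i', A j i i' ∈ OE) :
    -- there is a unique lift Â with the commutation property …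
    (∃! Ahat : ZMod a → Matrix (Fin d) (Fin d) (PowerSeries E),
      (∀ j i i', constantCoeff (Ahat j i i') = A j i i') ∧
      (∀ j : ZMod a,
        G (j - 1) * ((Ahat j * Matrix.diagonal fun i => qq ^ (k j i)).map ⇑γ) =
          (Ahat j * Matrix.diagonal fun i => qq ^ (k j i)) * (G j).map ⇑φ)) ∧
    -- … and it satisfies the coefficient bounds
    (∀ Ahat : ZMod a → Matrix (Fin d) (Fin d) (PowerSeries E),
      (∀ j i i', constantCoeff (Ahat j i i') = A j i i') →
      (∀ j : ZMod a,
        G (j - 1) * ((Ahat j * Matrix.diagonal fun i => qq ^ (k j i)).map ⇑γ) =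
          (Ahat j * Matrix.diagonal fun i => qq ^ (k j i)) * (G j).map ⇑φ) →
      ((∀ (n : ℕ) (j : ZMod a) (i i' : Fin d),
        (∏ t ∈ Finset.Icc 1 n,
            ((algebraMap ℚ_[p] E ((χ : ℤ_[p]) : ℚ_[p])) ^ t - 1)) *
          coeff n (Ahat j i i') ∈ OE) ∧
       ((∀ n : ℕ, 1 ≤ n →
          ord (∏ t ∈ Finset.Icc 1 n,
            ((algebraMap ℚ_[p] E ((χ : ℤ_[p]) : ℚ_[p])) ^ t - 1)) ≤
            (((n * p / (p - 1) ^ 2 : ℕ) : ℝ) : WithTop ℝ)) →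
        ∀ (n : ℕ) (j : ZMod a) (i i' : Fin d),
          ((-(((n : ℝ) * p) / ((p : ℝ) - 1) ^ 2) : ℝ) : WithTop ℝ) ≤
            ord (coeff n (Ahat j i i'))))) := by
  obtain ⟨u, hu0, huZp, hγqq⟩ := hγq
  have hZpOE : ∀ x ∈ Zp', x ∈ OE := hZp' ▸ range_algebraMap_comp_padicInt_le hordext hOE
  have hχ' : ∀ n, 1 ≤ n → coeff 1 (γ X) ^ n ≠ 1 := fun n hn => by
    rw [hγX1, ← map_pow, ← map_one (algebraMap ℚ_[p] E)]
    exact (algebraMap ℚ_[p] E).injective.ne (hχ n hn)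
  have := charZero_of_injective_algebraMap (algebraMap ℚ_[p] E).injective
  have hqq0 := ne_zero_of_X_mul_eq_one_add_X_pow_sub_one (Fact.out : p.Prime).ne_zero hqq
  have hφX0 : constantCoeff (φ X) = 0 := by simp [hφX]
  have hsol := fun Ahat : ZMod a → Matrix (Fin d) (Fin d) E⟦X⟧ => forall_congr' fun j =>
    Matrix.isDiag_mul_map_mul_diagonal_iff γ φ (hGdiag (j - 1)) (hGdiag j) hqq0 hγqq (k j) (Ahat j)
  set H₁ := fun j i i' => G (j - 1) i i * u ^ k j i'
  set H₂ := fun j i' => φ (G j i' i')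
  have hH₁ : ∀ j i i', constantCoeff (H₁ j i i') = 1 := by simp [H₁, hG0, hu0]
  have hH₂ : ∀ j i', constantCoeff (H₂ j i') = 1 := by
    simp [H₂, constantCoeff_endo φ hφC hφX0, hG0]
  have hspec := fun j i i' => twistedSol_spec hγC hγX0 hχ' (hH₁ j i i') (hH₂ j i') (A j i i')
  refine ⟨⟨fun j => Matrix.of fun i i' => twistedSol γ (H₁ j i i') (H₂ j i') (A j i i'),
    ⟨fun j i i' => constantCoeff_twistedSol .., (hsol _).2 hspec⟩,
    fun B ⟨hB0, hB⟩ => funext fun j => Matrix.ext fun i i' =>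
      eq_of_twisted hγC hγX0 hχ' (hH₁ j i i') (hH₂ j i') ((hsol B).1 hB j i i') (hspec j i i')
        (by rw [hB0, Matrix.of_apply, constantCoeff_twistedSol])⟩, fun Ahat hA0 hAeq => ?_⟩
  have hint : ∀ n j i i', (∏ t ∈ Finset.Icc 1 n,
      ((algebraMap ℚ_[p] E ((χ : ℤ_[p]) : ℚ_[p])) ^ t - 1)) * coeff n (Ahat j i i') ∈ OE :=
    fun n j i i' => hγX1 ▸ prod_mul_coeff_mem_of_twisted hγC hγX0 (hH₁ j i i') (hH₂ j i')
      (fun n => hZpOE _ (hγXZp n))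
      ((coeffsIn OE).mul_mem (hGint _ i i) ((coeffsIn OE).pow_mem (fun n => hZpOE _ (huZp n)) _))
      (endo_mem_coeffsIn φ hφC hφX0 (hφX ▸ one_add_X_pow_sub_one_mem_coeffsIn OE p)
        (hGint j i' i'))
      ((hsol Ahat).1 hAeq j i i') (hA0 j i i' ▸ hAint j i i') n
  refine ⟨hint, fun hβ n j i i' => ?_⟩
  rcases n.eq_zero_or_pos with rfl | hn
  · simpa [hA0] using (hOE _).1 (hAint j i i')
  · have hfloor : ((n * p / (p - 1) ^ 2 : ℕ) : ℝ) ≤ (n : ℝ) * p / ((p : ℝ) - 1) ^ 2 := by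
      have h := Nat.cast_div_le (α := ℝ) (m := n * p) (n := (p - 1) ^ 2)
      push_cast [Nat.cast_sub (Fact.out : p.Prime).one_le] at h
      exact h
    exact WithTop.neg_le_of_add_nonneg (hordmul _ _ ▸ (hOE _).1 (hint n j i i'))
      ((hβ n hn).trans (by exact_mod_cast hfloor))
end

section
/- Let Ĝ ∈ Id + π·M_{d×d}(O_E[[π]]) and let M_0 ∈ M_{d×d}(O_E). Then there exists a unique M ∈ M_{d×d}(E[[π]]) with constant term M_0 satisfying Ĝ·γ(M) = M·Ĝ. Moreover, for every n ≥ 0 the π^n-coefficient of M lies in β_{γ,n}^{−1}·M_{d×d}(O_E), and if in addition ord_p(β_{γ,n}) ≤ ⌊n·p/(p−1)²⌋ for all n ≥ 1, then M ∈ M_{d×d}(R_{(p−1)²/p, E}). -/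
/-!
Comparing `π^n`-coefficients, `Ĝ·γ(M) = M·Ĝ` becomes a triangular system
`(χ^n - 1)·M_n + ∑_{k<n} Φ_{n,k}(M_k) = 0` with `Φ_{n,k}(A) = Γ_{n,k}·A - A·G_{n-k}`, where `G_j` and
`Γ_{n,k}` are the `π^j`-coefficient of `Ĝ` and the `π^n`-coefficient of `γ(π)^k·Ĝ`; the diagonal term
is `(χ^n - 1)·M_n` because `γ(π) ≡ χπ mod π²` and `G_0 = 1`. Since `χ^n ≠ 1` the system determines
`M` from `M_0`. Every `Φ_{n,k}` preserves integral matrices, so induction on `n` shows that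
`β_{γ,n}·M_n` is integral, and the growth bound follows by taking valuations.
-/

open PowerSeries Finset

section Triangular

variable {K V : Type*} [CommRing K] [AddCommGroup V] [Module K V]

def IsTriangularSolution (Φ : ℕ → ℕ → V →ₗ[K] V) (a : ℕ → V) : Prop :=
  ∀ n, ∑ k ∈ range (n + 1), Φ n k (a k) = 0

variable {Φ : ℕ → ℕ → V →ₗ[K] V} {u : ℕ → K} {a : ℕ → V}

theorem IsTriangularSolution.diag_smul (hΦ : ∀ n, Φ n n = u n • LinearMap.id)
    (ha : IsTriangularSolution Φ a) (n : ℕ) :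
    u n • a n = -∑ k ∈ range n, Φ n k (a k) := by
  have := ha n
  rw [sum_range_succ, hΦ] at this
  exact eq_neg_of_add_eq_zero_right this

theorem IsTriangularSolution.prod_smul_mem (hΦ : ∀ n, Φ n n = u n • LinearMap.id)
    (ha : IsTriangularSolution Φ a) (O : Subring K) (N : AddSubgroup V)
    (hN : ∀ r ∈ O, ∀ v ∈ N, r • v ∈ N) (hu : ∀ n, u n ∈ O) (hΦN : ∀ n k, ∀ v ∈ N, Φ n k v ∈ N)
    (ha₀ : a 0 ∈ N) (n : ℕ) :
    (∏ t ∈ Icc 1 n, u t) • a n ∈ N := by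
  suffices ∀ n, ∀ k ≤ n, (∏ t ∈ Icc 1 n, u t) • a k ∈ N from this n n le_rfl
  intro n
  induction n with
  | zero => simpa using ha₀
  | succ n ih =>
    intro k hk
    rw [prod_Icc_succ_top (by omega), mul_comm, mul_smul]
    rcases hk.lt_or_eq with hk | rfl
    · exact hN _ (hu _) _ (ih k (by omega))
    · rw [smul_comm, ha.diag_smul hΦ, smul_neg, smul_sum]
      refine neg_mem (sum_mem fun k hk => ?_)
      rw [← map_smul]
      exact hΦN _ _ _ (ih k (by simpa [Nat.lt_succ_iff] using hk))

end Triangular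

section TriangularField

variable {K V : Type*} [Field K] [AddCommGroup V] [Module K V]

noncomputable def triangularSolution (u : ℕ → K) (Φ : ℕ → ℕ → V →ₗ[K] V) (v₀ : V) : ℕ → V
  | 0 => v₀
  | n + 1 => -(u (n + 1))⁻¹ • ∑ k : Fin (n + 1), Φ (n + 1) k (triangularSolution u Φ v₀ k)

variable {u : ℕ → K} {Φ : ℕ → ℕ → V →ₗ[K] V}

@[simp]
theorem triangularSolution_zero (v₀ : V) : triangularSolution u Φ v₀ 0 = v₀ := by
  rw [triangularSolution]

theorem isTriangularSolution_triangularSolution (hΦ : ∀ n, Φ n n = u n • LinearMap.id)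
    (hu₀ : u 0 = 0) (hu : ∀ n, u (n + 1) ≠ 0) (v₀ : V) :
    IsTriangularSolution Φ (triangularSolution u Φ v₀) := by
  intro n
  rw [sum_range_succ, hΦ, LinearMap.smul_apply, LinearMap.id_apply]
  cases n with
  | zero => simp [hu₀]
  | succ n =>
    rw [triangularSolution, smul_smul, mul_neg, mul_inv_cancel₀ (hu n), neg_one_smul,
      Fin.sum_univ_eq_sum_range (fun k => Φ (n + 1) k (triangularSolution u Φ v₀ k)),
      add_neg_cancel]

theorem IsTriangularSolution.eq (hΦ : ∀ n, Φ n n = u n • LinearMap.id) (hu : ∀ n, u (n + 1) ≠ 0)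
    {a b : ℕ → V} (ha : IsTriangularSolution Φ a) (hb : IsTriangularSolution Φ b)
    (h₀ : a 0 = b 0) : a = b := by
  funext n
  induction n using Nat.strong_induction_on with
  | _ n ih =>
    cases n with
    | zero => exact h₀
    | succ n =>
      have hsum : ∑ k ∈ range (n + 1), Φ (n + 1) k (a k) =
          ∑ k ∈ range (n + 1), Φ (n + 1) k (b k) :=
        sum_congr rfl fun k hk => by rw [ih k (mem_range.mp hk)]
      have := ha.diag_smul hΦ (n + 1)
      rw [hsum, ← hb.diag_smul hΦ] at this
      exact smul_right_injective V (hu n) this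

end TriangularField

namespace PowerSeries

theorem mem_range_map_subtype_iff {R : Type*} [Ring R] {O : Subring R} {f : R⟦X⟧} :
    f ∈ (map O.subtype).range ↔ ∀ n, coeff n f ∈ O := by
  refine ⟨?_, fun h => ⟨mk fun n => ⟨_, h n⟩, by ext; simp⟩⟩
  rintro ⟨g, rfl⟩ n
  simp [coeff_map]

variable {R : Type*} [CommSemiring R]

theorem coeff_mul_map_eq_sum (γ : R⟦X⟧ →+* R⟦X⟧) (hγC : ∀ c, γ (C c) = C c) (hγX : X ∣ γ X)
    (g f : R⟦X⟧) (n : ℕ) :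
    coeff n (g * γ f) = ∑ k ∈ range (n + 1), coeff k f * coeff n (γ X ^ k * g) := by
  obtain ⟨tail, hf⟩ :
      ∃ tail, f = X ^ (n + 1) * tail + ∑ k ∈ range (n + 1), C (coeff k f) * X ^ k := by
    rw [← eval₂_trunc_eq_sum_range, Polynomial.eval₂_C_X_eq_coe]
    exact ⟨_, eq_X_pow_mul_shift_add_trunc _ _⟩
  have htail : coeff n (g * γ (X ^ (n + 1) * tail)) = 0 := by
    refine X_pow_dvd_iff.mp ?_ n n.lt_succ_self
    rw [map_mul, map_pow]
    exact Dvd.dvd.mul_left (Dvd.dvd.mul_right (pow_dvd_pow_of_dvd hγX _) _) _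
  conv_lhs => rw [hf, map_add, mul_add, map_add, htail, zero_add, map_sum, mul_sum, map_sum]
  refine sum_congr rfl fun k _ => ?_
  rw [map_mul γ, map_pow γ, hγC, mul_left_comm, coeff_C_mul, mul_comm g]

theorem coeff_pow_mul_of_X_dvd {φ : R⟦X⟧} (hφ : X ∣ φ) (g : R⟦X⟧) (n : ℕ) :
    coeff n (φ ^ n * g) = coeff 1 φ ^ n * constantCoeff g := by
  obtain ⟨h, rfl⟩ := hφ
  rw [mul_pow, mul_assoc, coeff_X_pow_mul', if_pos le_rfl, Nat.sub_self, coeff_succ_X_mul,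
    coeff_zero_eq_constantCoeff_apply, coeff_zero_eq_constantCoeff_apply, map_mul, map_pow]

end PowerSeries

namespace Matrix

section Semiring

variable {R : Type*} [Semiring R] {l m o : Type*}

theorem ext_coeff {M N : Matrix l m R⟦X⟧} (h : ∀ n, M.map (coeff n) = N.map (coeff n)) :
    M = N :=
  ext fun i j => PowerSeries.ext fun n => congr_fun₂ (h n) i j

@[simp]
theorem map_coeff_of_mk (a : ℕ → Matrix l m R) (n : ℕ) :
    (of fun i j => mk fun k => a k i j).map (coeff n) = a n := by
  ext; simp

theorem map_coeff_mul [Fintype m] (P : Matrix l m R⟦X⟧) (Q : Matrix m o R⟦X⟧) (n : ℕ) :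
    (P * Q).map (coeff n) = ∑ k ∈ range (n + 1), P.map (coeff k) * Q.map (coeff (n - k)) := by
  ext i j
  simp only [map_apply, mul_apply, sum_apply, map_sum, coeff_mul,
    Nat.sum_antidiagonal_eq_sum_range_succ_mk]
  exact sum_comm

end Semiring

theorem map_coeff_mul_map {R : Type*} [CommSemiring R] {l m o : Type*} [Fintype m]
    (γ : R⟦X⟧ →+* R⟦X⟧) (hγC : ∀ c, γ (C c) = C c) (hγX : X ∣ γ X)
    (G : Matrix l m R⟦X⟧) (M : Matrix m o R⟦X⟧) (n : ℕ) :
    (G * M.map γ).map (coeff n) =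
      ∑ k ∈ range (n + 1), (γ X ^ k • G).map (coeff n) * M.map (coeff k) := by
  ext i j
  simp only [map_apply, mul_apply, sum_apply, map_sum, smul_apply, smul_eq_mul,
    coeff_mul_map_eq_sum γ hγC hγX]
  rw [sum_comm]
  exact sum_congr rfl fun _ _ => sum_congr rfl fun _ _ => mul_comm _ _

end Matrix

section TwistedCommutator

variable {R : Type*} [CommRing R] {m : Type*} [Fintype m] [DecidableEq m]
  (γ : R⟦X⟧ →+* R⟦X⟧) (G : Matrix m m R⟦X⟧)

/-- The contribution of the `X^k`-coefficient of `M` to the `X^n`-coefficient of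
`G * M.map γ - M * G`. -/
noncomputable def twistedCommCoeff (n k : ℕ) : Module.End R (Matrix m m R) :=
  LinearMap.mulLeft R ((γ X ^ k • G).map (coeff n)) - LinearMap.mulRight R (G.map (coeff (n - k)))

theorem map_coeff_mul_map_sub_mul (hγC : ∀ c, γ (C c) = C c) (hγX : X ∣ γ X)
    (M : Matrix m m R⟦X⟧) (n : ℕ) :
    (G * M.map γ - M * G).map (coeff n) =
      ∑ k ∈ range (n + 1), twistedCommCoeff γ G n k (M.map (coeff k)) := by
  rw [Matrix.map_sub _ (map_sub _), Matrix.map_coeff_mul_map γ hγC hγX, Matrix.map_coeff_mul,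
    ← sum_sub_distrib]
  rfl

theorem mul_map_eq_mul_iff (hγC : ∀ c, γ (C c) = C c) (hγX : X ∣ γ X) (M : Matrix m m R⟦X⟧) :
    G * M.map γ = M * G ↔
      IsTriangularSolution (twistedCommCoeff γ G) (fun n => M.map (coeff n)) := by
  simp only [IsTriangularSolution, ← map_coeff_mul_map_sub_mul γ G hγC hγX,
    ← sub_eq_zero (a := G * _)]
  refine ⟨fun h n => by rw [h, Matrix.map_zero _ (map_zero _)], fun h => ?_⟩
  ext i j k
  simpa using congr_fun₂ (h k) i j

variable {G}

theorem twistedCommCoeff_self (hγX : X ∣ γ X) (hG : G.map constantCoeff = 1) (n : ℕ) :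
    twistedCommCoeff γ G n n = (coeff 1 (γ X) ^ n - 1) • LinearMap.id := by
  have hΓ : (γ X ^ n • G).map (coeff n) = coeff 1 (γ X) ^ n • 1 := by
    ext i j
    simp [coeff_pow_mul_of_X_dvd hγX, ← congr_fun₂ hG i j]
  ext1 A
  simp [twistedCommCoeff, hΓ, hG, sub_smul]

theorem twistedCommCoeff_mem {O : Subring R} (hγX : ∀ n, coeff n (γ X) ∈ O)
    (hG : ∀ i j n, coeff n (G i j) ∈ O) (n k : ℕ) {A : Matrix m m R} (hA : A ∈ O.matrix) :
    twistedCommCoeff γ G n k A ∈ O.matrix := by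
  have hγXO : γ X ∈ (map O.subtype).range := mem_range_map_subtype_iff.mpr hγX
  refine sub_mem (mul_mem (fun i j => ?_) hA) (mul_mem hA fun i j => hG i j _)
  exact mem_range_map_subtype_iff.mp
    (mul_mem (pow_mem hγXO k) (mem_range_map_subtype_iff.mpr (hG i j))) n

end TwistedCommutator

section Solution

variable {m : Type*} [Fintype m] [DecidableEq m]

theorem existsUnique_mul_map_eq_mul {K : Type*} [Field K] (γ : K⟦X⟧ →+* K⟦X⟧)
    (hγC : ∀ c, γ (C c) = C c) (hγX : X ∣ γ X) {G : Matrix m m K⟦X⟧}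
    (hG : G.map constantCoeff = 1) (hχ : ∀ n, coeff 1 (γ X) ^ (n + 1) ≠ 1) (M₀ : Matrix m m K) :
    ∃! M : Matrix m m K⟦X⟧, M.map constantCoeff = M₀ ∧ G * M.map γ = M * G := by
  have hdiag := twistedCommCoeff_self γ hγX hG
  have hu : ∀ n, coeff 1 (γ X) ^ (n + 1) - 1 ≠ 0 := fun n => sub_ne_zero.mpr (hχ n)
  set a := triangularSolution (fun n => coeff 1 (γ X) ^ n - 1) (twistedCommCoeff γ G) M₀
  have ha : IsTriangularSolution (twistedCommCoeff γ G) a :=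
    isTriangularSolution_triangularSolution hdiag (by simp) hu M₀
  refine ⟨Matrix.of fun i j => mk fun n => a n i j, ⟨?_, ?_⟩,
    fun M ⟨hM₀, hM⟩ => Matrix.ext_coeff fun n => ?_⟩
  · rw [← coeff_zero_eq_constantCoeff (R := K), Matrix.map_coeff_of_mk]
    exact triangularSolution_zero M₀
  · rw [mul_map_eq_mul_iff γ G hγC hγX]
    simpa only [Matrix.map_coeff_of_mk] using ha
  · rw [Matrix.map_coeff_of_mk]
    refine congr_fun (((mul_map_eq_mul_iff γ G hγC hγX M).mp hM).eq hdiag hu ha ?_) n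
    rw [coeff_zero_eq_constantCoeff (R := K), hM₀]
    exact (triangularSolution_zero M₀).symm

theorem prod_smul_map_coeff_mem {R : Type*} [CommRing R] {O : Subring R} (γ : R⟦X⟧ →+* R⟦X⟧)
    (hγC : ∀ c, γ (C c) = C c) (hγX : X ∣ γ X) (hγXO : ∀ n, coeff n (γ X) ∈ O)
    {G : Matrix m m R⟦X⟧} (hG : G.map constantCoeff = 1) (hGO : ∀ i j n, coeff n (G i j) ∈ O)
    {M : Matrix m m R⟦X⟧} (hM : G * M.map γ = M * G) (hM₀ : M.map constantCoeff ∈ O.matrix)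
    (n : ℕ) : (∏ t ∈ Icc 1 n, (coeff 1 (γ X) ^ t - 1)) • M.map (coeff n) ∈ O.matrix :=
  ((mul_map_eq_mul_iff γ G hγC hγX M).mp hM).prod_smul_mem (twistedCommCoeff_self γ hγX hG) O
    O.matrix.toAddSubgroup (fun r hr v hv i j => (mul_mem hr (hv i j) : r * v i j ∈ O))
    (fun t => sub_mem (pow_mem (hγXO 1) t) (one_mem O))
    (fun n k _ hA => twistedCommCoeff_mem γ hγXO hGO n k hA)
    (by rwa [coeff_zero_eq_constantCoeff (R := R)]) n

end Solution

theorem WithTop.coe_neg_le_of_nonneg_add {a b : WithTop ℝ} {r : ℝ} (h : 0 ≤ a + b)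
    (ha : a ≤ r) : ((-r : ℝ) : WithTop ℝ) ≤ b := by
  induction b with
  | top => exact le_top
  | coe y =>
    induction a with
    | top => exact absurd ha (by simp)
    | coe x =>
      norm_cast at h ha ⊢
      linarith

theorem algebraMap_padicInt_mem {p : ℕ} [Fact p.Prime] {E : Type*} [Ring E] [Algebra ℚ_[p] E]
    {ord : E → WithTop ℝ}
    (hordext : ∀ x : ℚ_[p], x ≠ 0 → ord (algebraMap ℚ_[p] E x) = ((x.valuation : ℝ) : WithTop ℝ))
    {OE : Subring E} (hOE : ∀ x : E, x ∈ OE ↔ 0 ≤ ord x) (z : ℤ_[p]) :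
    algebraMap ℚ_[p] E z ∈ OE := by
  by_cases hz : (z : ℚ_[p]) = 0
  · rw [hz, map_zero]
    exact zero_mem OE
  · rw [hOE, hordext _ hz]
    exact WithTop.coe_nonneg.mpr (Int.cast_nonneg_iff.mpr PadicInt.valuation_coe_nonneg)

theorem stmt17_general
    (p : ℕ) [Fact (Nat.Prime p)]
    (E : Type*) [Field E] [Algebra ℚ_[p] E]
    (ord : E → WithTop ℝ)
    (hordmul : ∀ x y : E, ord (x * y) = ord x + ord y)
    (hordext : ∀ x : ℚ_[p], x ≠ 0 →
      ord (algebraMap ℚ_[p] E x) = ((x.valuation : ℝ) : WithTop ℝ))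
    (OE : Subring E) (hOE : ∀ x : E, x ∈ OE ↔ 0 ≤ ord x)
    (Zp' : Subring E)
    (hZp' : Zp' = ((algebraMap ℚ_[p] E).comp (PadicInt.Coe.ringHom (p := p))).range)
    -- γ and its properties
    (γ : PowerSeries E →+* PowerSeries E)
    (hγC : ∀ c : E, γ (C c) = C c)
    (hγX0 : constantCoeff (γ X) = 0)
    (hγXZp : ∀ n, coeff n (γ X) ∈ Zp')
    (χ : ℤ_[p]ˣ) (hχ : ∀ n : ℕ, 1 ≤ n → ((χ : ℤ_[p]) : ℚ_[p]) ^ n ≠ 1)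
    (hγX1 : coeff 1 (γ X) = algebraMap ℚ_[p] E ((χ : ℤ_[p]) : ℚ_[p]))
    -- the data
    (d : ℕ)
    (G : Matrix (Fin d) (Fin d) (PowerSeries E))
    (hGint : ∀ i i', ∀ l : ℕ, coeff l (G i i') ∈ OE)
    (hG0 : ∀ i i', constantCoeff (G i i') = if i = i' then (1 : E) else 0)
    (M₀ : Matrix (Fin d) (Fin d) E)
    (hM₀ : ∀ i i', M₀ i i' ∈ OE) :
    (∃! M : Matrix (Fin d) (Fin d) (PowerSeries E),
      (∀ i i', constantCoeff (M i i') = M₀ i i') ∧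
      G * M.map ⇑γ = M * G) ∧
    (∀ M : Matrix (Fin d) (Fin d) (PowerSeries E),
      (∀ i i', constantCoeff (M i i') = M₀ i i') →
      G * M.map ⇑γ = M * G →
      ((∀ (n : ℕ) (i i' : Fin d),
        (∏ t ∈ Finset.Icc 1 n,
            ((algebraMap ℚ_[p] E ((χ : ℤ_[p]) : ℚ_[p])) ^ t - 1)) *
          coeff n (M i i') ∈ OE) ∧
       ((∀ n : ℕ, 1 ≤ n →
          ord (∏ t ∈ Finset.Icc 1 n,
            ((algebraMap ℚ_[p] E ((χ : ℤ_[p]) : ℚ_[p])) ^ t - 1)) ≤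
            (((n * p / (p - 1) ^ 2 : ℕ) : ℝ) : WithTop ℝ)) →
        ∀ (n : ℕ) (i i' : Fin d),
          ((-(((n : ℝ) * p) / ((p : ℝ) - 1) ^ 2) : ℝ) : WithTop ℝ) ≤
            ord (coeff n (M i i'))))) := by
  have hγXO : ∀ n, coeff n (γ X) ∈ OE := fun n => by
    obtain ⟨z, hz⟩ := hZp' ▸ hγXZp n
    exact hz ▸ algebraMap_padicInt_mem hordext hOE z
  have hγX : X ∣ γ X := X_dvd_iff.mpr hγX0
  have hG : G.map constantCoeff = 1 := Matrix.ext hG0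
  have hχ' : ∀ n, coeff 1 (γ X) ^ (n + 1) ≠ 1 := fun n h =>
    hχ (n + 1) n.succ_pos ((algebraMap ℚ_[p] E).injective (by simpa [hγX1] using h))
  refine ⟨(existsUnique_congr fun M => and_congr_left' Matrix.ext_iff.symm).mp
    (existsUnique_mul_map_eq_mul γ hγC hγX hG hχ' M₀), fun M hM0 hM => ?_⟩
  have hint := prod_smul_map_coeff_mem γ hγC hγX hγXO hG hGint hM
    (fun i j => show constantCoeff (M i j) ∈ OE from (hM0 i j).symm ▸ hM₀ i j)
  rw [hγX1] at hint
  refine ⟨fun n i i' => hint n i i', fun hβ n i i' => ?_⟩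
  refine WithTop.coe_neg_le_of_nonneg_add (by rw [← hordmul, ← hOE]; exact hint n i i') ?_
  rcases n.eq_zero_or_pos with rfl | hn
  · simpa using (hordext 1 one_ne_zero).le
  · refine (hβ n hn).trans (WithTop.coe_le_coe.mpr (Nat.cast_div_le.trans_eq ?_))
    push_cast [Nat.cast_sub (Fact.out : p.Prime).one_le]
    rfl

theorem stmt17
    (p : ℕ) [Fact (Nat.Prime p)]
    (E : Type*) [Field E] [Algebra ℚ_[p] E] [FiniteDimensional ℚ_[p] E]
    (ord : E → WithTop ℝ)
    (hord0 : ∀ x : E, ord x = ⊤ ↔ x = 0)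
    (hordmul : ∀ x y : E, ord (x * y) = ord x + ord y)
    (hordadd : ∀ x y : E, min (ord x) (ord y) ≤ ord (x + y))
    (hordext : ∀ x : ℚ_[p], x ≠ 0 →
      ord (algebraMap ℚ_[p] E x) = ((x.valuation : ℝ) : WithTop ℝ))
    (OE : Subring E) (hOE : ∀ x : E, x ∈ OE ↔ 0 ≤ ord x)
    (Zp' : Subring E)
    (hZp' : Zp' = ((algebraMap ℚ_[p] E).comp (PadicInt.Coe.ringHom (p := p))).range)
    -- γ and its properties
    (γ : PowerSeries E →+* PowerSeries E)
    (hγC : ∀ c : E, γ (C c) = C c)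
    (hγZp : ∀ f : PowerSeries E, (∀ n, coeff n f ∈ Zp') → ∀ n, coeff n (γ f) ∈ Zp')
    (hγX0 : constantCoeff (γ X) = 0)
    (hγXZp : ∀ n, coeff n (γ X) ∈ Zp')
    (χ : ℤ_[p]ˣ) (hχ : ∀ n : ℕ, 1 ≤ n → ((χ : ℤ_[p]) : ℚ_[p]) ^ n ≠ 1)
    (hγX1 : coeff 1 (γ X) = algebraMap ℚ_[p] E ((χ : ℤ_[p]) : ℚ_[p]))
    -- the data
    (d : ℕ) (hd : 0 < d)
    (G : Matrix (Fin d) (Fin d) (PowerSeries E))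
    (hGint : ∀ i i', ∀ l : ℕ, coeff l (G i i') ∈ OE)
    (hG0 : ∀ i i', constantCoeff (G i i') = if i = i' then (1 : E) else 0)
    (M₀ : Matrix (Fin d) (Fin d) E)
    (hM₀ : ∀ i i', M₀ i i' ∈ OE) :
    (∃! M : Matrix (Fin d) (Fin d) (PowerSeries E),
      (∀ i i', constantCoeff (M i i') = M₀ i i') ∧
      G * M.map ⇑γ = M * G) ∧
    (∀ M : Matrix (Fin d) (Fin d) (PowerSeries E),
      (∀ i i', constantCoeff (M i i') = M₀ i i') →
      G * M.map ⇑γ = M * G →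
      ((∀ (n : ℕ) (i i' : Fin d),
        (∏ t ∈ Finset.Icc 1 n,
            ((algebraMap ℚ_[p] E ((χ : ℤ_[p]) : ℚ_[p])) ^ t - 1)) *
          coeff n (M i i') ∈ OE) ∧
       ((∀ n : ℕ, 1 ≤ n →
          ord (∏ t ∈ Finset.Icc 1 n,
            ((algebraMap ℚ_[p] E ((χ : ℤ_[p]) : ℚ_[p])) ^ t - 1)) ≤
            (((n * p / (p - 1) ^ 2 : ℕ) : ℝ) : WithTop ℝ)) →
        ∀ (n : ℕ) (i i' : Fin d),
          ((-(((n : ℝ) * p) / ((p : ℝ) - 1) ^ 2) : ℝ) : WithTop ℝ) ≤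
            ord (coeff n (M i i'))))) :=
  stmt17_general p E ord hordmul hordext OE hOE Zp' hZp' γ hγC hγX0 hγXZp χ hχ hγX1 d G hGint hG0 M₀
    hM₀
end

section
/- Let a ≥ 1 and let k_0, …, k_{a−1} be nonnegative integers. For each j let A_j ∈ GL_2(O_E) and Δ_j := diag(p^{k_j}, 1), and set P := (A_0·Δ_0)·(A_1·Δ_1)·⋯·(A_{a−1}·Δ_{a−1}) ∈ M_{2×2}(O_E); note ord_p(det P) = Σ_{j=0}^{a−1} k_j. Let t := tr(P). Then the following are equivalent: (a) P has an eigenvalue λ (a root, in an algebraic closure of E equipped with the unique extension of ord_p, of the characteristic polynomial of P) with ord_p(λ) = Σ_{j∈J} k_j for some subset J ⊆ {0, …, a−1}; (b) either ord_p(t) > (1/2)·Σ_{j=0}^{a−1} k_j and (1/2)·Σ_{j=0}^{a−1} k_j = Σ_{j∈J} k_j for some subset J ⊆ {0, …, a−1}, or ord_p(t) ≤ (1/2)·Σ_{j=0}^{a−1} k_j and ord_p(t) = Σ_{j∈J} k_j for some subset J ⊆ {0, …, a−1}. (Here Σ_{j∈∅} k_j = 0.) -/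
/-!
The eigenvalues `λ, μ` of `P` satisfy `λ + μ = t` and `λ μ = det P`, and `ord (det P) = Σ k_j`
because each `A_j` is a unit over `O_E`. So the two slopes add up to `Σ k_j`, and the ultrametric
inequality gives `min (ord λ) (ord μ) = min (ord t) (Σ k_j / 2)`: if the slopes differ, `ord t` is
the smaller one; otherwise both equal `Σ k_j / 2 ≤ ord t`. As `ord λ = Σ_{j ∈ J} k_j` exactly when
`ord μ = Σ_{j ∉ J} k_j`, condition (a) says that `min (ord t) (Σ k_j / 2)` is a subset sum of the
`k_j`, and splitting according to which term realises the minimum gives (b).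
-/

open Polynomial Matrix

namespace AddValuation

variable {K : Type*} [Field K]

theorem map_one_eq_zero_of_top_iff {f : K → WithTop ℝ} (h0 : ∀ x, f x = ⊤ ↔ x = 0)
    (hmul : ∀ x y, f (x * y) = f x + f y) : f 1 = 0 := by
  have hne : f 1 ≠ ⊤ := fun h => one_ne_zero ((h0 1).1 h)
  lift f 1 to ℝ using hne with r hr
  have h := hmul 1 1
  rw [mul_one, ← hr] at h
  have : r = r + r := by exact_mod_cast h
  simp [show r = 0 by linarith]

noncomputable def ofField (f : K → WithTop ℝ) (h0 : ∀ x, f x = ⊤ ↔ x = 0)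
    (hmul : ∀ x y, f (x * y) = f x + f y) (hadd : ∀ x y, min (f x) (f y) ≤ f (x + y)) :
    AddValuation K (WithTop ℝ) :=
  .of f ((h0 0).2 rfl) (map_one_eq_zero_of_top_iff h0 hmul) hadd hmul

@[simp]
theorem ofField_apply {f : K → WithTop ℝ} (h0 : ∀ x, f x = ⊤ ↔ x = 0)
    (hmul : ∀ x y, f (x * y) = f x + f y) (hadd : ∀ x y, min (f x) (f y) ≤ f (x + y)) (x : K) :
    ofField f h0 hmul hadd x = f x :=
  rfl

variable {R : Type*} [CommRing R] {Γ₀ : Type*} [LinearOrderedAddCommMonoidWithTop Γ₀]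
  (v : AddValuation R Γ₀)

theorem map_prod {ι : Type*} (s : Finset ι) (f : ι → R) :
    v (∏ i ∈ s, f i) = ∑ i ∈ s, v (f i) := by
  classical
  induction s using Finset.induction_on with
  | empty => simp
  | insert i s hi ih => rw [Finset.prod_insert hi, Finset.sum_insert hi, v.map_mul, ih]

theorem map_eq_zero_of_mul_eq_one {x y : R} (hx : 0 ≤ v x) (hy : 0 ≤ v y) (h : x * y = 1) :
    v x = 0 :=
  le_antisymm (calc v x ≤ v x + v y := le_add_of_nonneg_right hy
    _ = 0 := by rw [← v.map_mul, h, v.map_one]) hx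

theorem min_eq_min_map_add_of_map_mul {L : Type*} [Field L] (v : AddValuation L (WithTop ℝ))
    {x y : L} {D : ℝ} (hD : v (x * y) = D) :
    min (v x) (v y) = min (v (x + y)) ((D / 2 : ℝ) : WithTop ℝ) := by
  rw [v.map_mul] at hD
  have hx : v x ≠ ⊤ := fun h => by rw [h] at hD; simp at hD
  have hy : v y ≠ ⊤ := fun h => by rw [h] at hD; simp at hD
  have hxy := v.map_add x y
  lift v x to ℝ using hx with a ha
  lift v y to ℝ using hy with b hb
  rw [← WithTop.coe_add, WithTop.coe_inj] at hD
  rcases eq_or_ne a b with rfl | hab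
  · rw [min_self] at hxy
    rw [min_self, show D / 2 = a by linarith, min_eq_right hxy]
  · have hmin : min a b ≤ D / 2 := min_le_iff.2 <| (le_total a b).imp (by grind) (by grind)
    rw [v.map_add_of_distinct_val (by rwa [← ha, ← hb, Ne, WithTop.coe_inj]), ← ha, ← hb,
      ← WithTop.coe_min, ← WithTop.coe_min, min_eq_left hmin]

end AddValuation

theorem Matrix.det_mem_of_forall_mem {n R : Type*} [Fintype n] [DecidableEq n] [CommRing R]
    (S : Subring R) {M : Matrix n n R} (h : ∀ i j, M i j ∈ S) : M.det ∈ S := by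
  rw [det_apply]
  exact sum_mem fun σ _ => by
    rw [Units.smul_def]; exact zsmul_mem (prod_mem fun i _ => h _ _) _

theorem AddValuation.map_det_eq_zero_of_mul_eq_one {n R Γ₀ : Type*} [Fintype n] [DecidableEq n]
    [CommRing R] [LinearOrderedAddCommMonoidWithTop Γ₀] (v : AddValuation R Γ₀) (S : Subring R)
    (hS : ∀ x ∈ S, 0 ≤ v x) {M N : Matrix n n R} (hM : ∀ i j, M i j ∈ S) (hN : ∀ i j, N i j ∈ S)
    (hMN : M * N = 1) : v M.det = 0 :=
  v.map_eq_zero_of_mul_eq_one (hS _ (det_mem_of_forall_mem S hM))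
    (hS _ (det_mem_of_forall_mem S hN)) (by rw [← det_mul, hMN, det_one])

theorem Matrix.det_prod_ofFn_mul_diagonal {R : Type*} [CommRing R] {a : ℕ}
    (A : Fin a → Matrix (Fin 2) (Fin 2) R) (c : Fin a → R) :
    (List.ofFn fun j => A j * diagonal ![c j, 1]).prod.det = ∏ j, (A j).det * c j := by
  rw [← coe_detMonoidHom, map_list_prod, List.map_ofFn, List.prod_ofFn]
  simp [det_mul, det_diagonal, Fin.prod_univ_two]

theorem AddValuation.map_det_prod_ofFn_mul_diagonal {R : Type*} [CommRing R]
    (v : AddValuation R (WithTop ℝ)) {a : ℕ} (A : Fin a → Matrix (Fin 2) (Fin 2) R)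
    (hA : ∀ j, v (A j).det = 0) {c : R} (hc : v c = 1) (k : Fin a → ℕ) :
    v (List.ofFn fun j => A j * diagonal ![c ^ k j, 1]).prod.det = ((∑ j, k j : ℕ) : ℝ) := by
  rw [det_prod_ofFn_mul_diagonal, v.map_prod]
  simp [v.map_mul, v.map_pow, hA, hc]

theorem sq_sub_mul_add_eq_zero_iff {L : Type*} [CommRing L] [IsDomain L] {t d r : L}
    (hr : r ^ 2 - t * r + d = 0) (x : L) : x ^ 2 - t * x + d = 0 ↔ x = r ∨ x = t - r := by
  rw [show x ^ 2 - t * x + d = (x - r) * (x - (t - r)) by linear_combination hr, mul_eq_zero,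
    sub_eq_zero, sub_eq_zero]

theorem exists_sq_sub_mul_add_eq_zero_and_iff {L α : Type*} [CommRing L] [IsDomain L]
    [LinearOrder α] {t d r : L} (hr : r ^ 2 - t * r + d = 0) (f : L → α) {Q : α → Prop}
    (hQ : Q (f r) ↔ Q (f (t - r))) :
    (∃ x, x ^ 2 - t * x + d = 0 ∧ Q (f x)) ↔ Q (min (f r) (f (t - r))) := by
  simp only [sq_sub_mul_add_eq_zero_iff hr, or_and_right, exists_or, exists_eq_left, ← hQ,
    or_self]
  rcases min_choice (f r) (f (t - r)) with h | h <;> simp only [h, hQ]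

theorem pred_min_iff {α : Type*} [LinearOrder α] (Q : α → Prop) (z c : α) :
    Q (min z c) ↔ (c < z ∧ Q c) ∨ (z ≤ c ∧ Q z) := by
  rcases lt_or_ge c z with h | h
  · simp [min_eq_right h.le, h, not_le.2 h]
  · simp [h, not_lt.2 h]

section SubsetSum

variable {ι : Type*} (k : ι → ℕ)

def IsSubsetSum (z : WithTop ℝ) : Prop := ∃ J : Finset ι, z = ((∑ j ∈ J, k j : ℕ) : ℝ)

variable {k} [Fintype ι] {z w : WithTop ℝ}

theorem IsSubsetSum.of_add_eq (hz : IsSubsetSum k z) (hzw : z + w = ((∑ j, k j : ℕ) : ℝ)) :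
    IsSubsetSum k w := by
  classical
  obtain ⟨J, rfl⟩ := hz
  have hw : w ≠ ⊤ := fun h => WithTop.top_ne_coe (by rwa [h, WithTop.add_top] at hzw)
  lift w to ℝ using hw
  refine ⟨Jᶜ, ?_⟩
  rw [← Finset.sum_add_sum_compl J k] at hzw
  norm_cast at hzw ⊢
  push_cast at hzw ⊢
  linarith

theorem isSubsetSum_iff_of_add_eq (hzw : z + w = ((∑ j, k j : ℕ) : ℝ)) :
    IsSubsetSum k z ↔ IsSubsetSum k w :=
  ⟨fun h => h.of_add_eq hzw, fun h => h.of_add_eq (by rwa [add_comm])⟩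

end SubsetSum

theorem stmt18_general
    (p : ℕ) [Fact (Nat.Prime p)]
    (E : Type*) [Field E] [Algebra ℚ_[p] E]
    (ord : E → WithTop ℝ)
    (hord0 : ∀ x : E, ord x = ⊤ ↔ x = 0)
    (hordmul : ∀ x y : E, ord (x * y) = ord x + ord y)
    (hordadd : ∀ x y : E, min (ord x) (ord y) ≤ ord (x + y))
    (hordext : ∀ x : ℚ_[p], x ≠ 0 →
      ord (algebraMap ℚ_[p] E x) = ((x.valuation : ℝ) : WithTop ℝ))
    (OE : Subring E) (hOE : ∀ x : E, x ∈ OE ↔ 0 ≤ ord x)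
    -- the unique extension of ord to an algebraic closure of E
    (ordbar : AlgebraicClosure E → WithTop ℝ)
    (hordbar0 : ∀ x, ordbar x = ⊤ ↔ x = 0)
    (hordbarmul : ∀ x y, ordbar (x * y) = ordbar x + ordbar y)
    (hordbaradd : ∀ x y, min (ordbar x) (ordbar y) ≤ ordbar (x + y))
    (hordbarext : ∀ x : E, ordbar (algebraMap E (AlgebraicClosure E) x) = ord x)
    -- the data
    (a : ℕ) (k : Fin a → ℕ)
    (A : Fin a → Matrix (Fin 2) (Fin 2) E)
    (hAint : ∀ j i i', A j i i' ∈ OE)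
    (hAinv : ∀ j, ∃ Ainv : Matrix (Fin 2) (Fin 2) E,
      (∀ i i', Ainv i i' ∈ OE) ∧ A j * Ainv = 1 ∧ Ainv * A j = 1) :
    -- (a) ⟺ (b), with P and t written out
    ((∃ (lam : AlgebraicClosure E) (J : Finset (Fin a)),
        Polynomial.aeval lam
          (Matrix.charpoly
            ((List.ofFn fun j : Fin a =>
              A j * Matrix.diagonal ![(p : E) ^ (k j), 1]).prod)) = 0 ∧
        ordbar lam = (((∑ j ∈ J, k j : ℕ) : ℝ) : WithTop ℝ))
      ↔
      ((((((∑ j, k j : ℕ) : ℝ) / 2 : ℝ) : WithTop ℝ) <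
          ord (Matrix.trace
            ((List.ofFn fun j : Fin a =>
              A j * Matrix.diagonal ![(p : E) ^ (k j), 1]).prod)) ∧
        ∃ J : Finset (Fin a),
          (((∑ j, k j : ℕ) : ℝ) / 2 : ℝ) = ((∑ j ∈ J, k j : ℕ) : ℝ))
      ∨
        (ord (Matrix.trace
            ((List.ofFn fun j : Fin a =>
              A j * Matrix.diagonal ![(p : E) ^ (k j), 1]).prod)) ≤
          ((((∑ j, k j : ℕ) : ℝ) / 2 : ℝ) : WithTop ℝ) ∧
        ∃ J : Finset (Fin a),
          ord (Matrix.trace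
            ((List.ofFn fun j : Fin a =>
              A j * Matrix.diagonal ![(p : E) ^ (k j), 1]).prod)) =
            (((∑ j ∈ J, k j : ℕ) : ℝ) : WithTop ℝ)))) := by
  classical
  set P := (List.ofFn fun j : Fin a => A j * diagonal ![(p : E) ^ (k j), 1]).prod
  let v := AddValuation.ofField ord hord0 hordmul hordadd
  let w := AddValuation.ofField ordbar hordbar0 hordbarmul hordbaradd
  have hdetA (j : Fin a) : ord (A j).det = 0 := by
    obtain ⟨B, hB, hAB, -⟩ := hAinv j
    exact v.map_det_eq_zero_of_mul_eq_one OE (fun x => (hOE x).1) (hAint j) hB hAB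
  have hp : ord (p : E) = 1 := by
    simpa [Padic.valuation_p] using hordext p (Nat.cast_ne_zero.2 (Fact.out : p.Prime).ne_zero)
  have hdet : ord P.det = ((∑ j, k j : ℕ) : ℝ) := v.map_det_prod_ofFn_mul_diagonal A hdetA hp k
  set t := algebraMap E (AlgebraicClosure E) P.trace
  have hcharpoly (x : AlgebraicClosure E) :
      aeval x P.charpoly = x ^ 2 - t * x + algebraMap E _ P.det := by
    simp [charpoly_fin_two, t]
  obtain ⟨lam, hlam⟩ := IsAlgClosed.exists_aeval_eq_zero (AlgebraicClosure E) P.charpoly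
    (by rw [charpoly_degree_eq_dim]; simp)
  rw [hcharpoly] at hlam
  have hprod : ordbar (lam * (t - lam)) = ((∑ j, k j : ℕ) : ℝ) := by
    rw [show lam * (t - lam) = algebraMap E _ P.det by linear_combination -hlam, hordbarext, hdet]
  have hmin : min (ordbar lam) (ordbar (t - lam)) =
      min (ord P.trace) (((∑ j, k j : ℕ) / 2 : ℝ) : WithTop ℝ) := by
    simpa only [w, AddValuation.ofField_apply, add_sub_cancel, t, hordbarext]
      using w.min_eq_min_map_add_of_map_mul hprod
  have hroots : (∃ x, aeval x P.charpoly = 0 ∧ IsSubsetSum k (ordbar x)) ↔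
      IsSubsetSum k (min (ordbar lam) (ordbar (t - lam))) := by
    simp only [hcharpoly]
    exact exists_sq_sub_mul_add_eq_zero_and_iff hlam ordbar
      (isSubsetSum_iff_of_add_eq (by rwa [← hordbarmul]))
  rw [hmin] at hroots
  simpa only [IsSubsetSum, WithTop.coe_inj, exists_and_left]
    using hroots.trans (pred_min_iff (IsSubsetSum k) _ _)

theorem stmt18
    (p : ℕ) [Fact (Nat.Prime p)]
    (E : Type*) [Field E] [Algebra ℚ_[p] E] [FiniteDimensional ℚ_[p] E]
    (ord : E → WithTop ℝ)
    (hord0 : ∀ x : E, ord x = ⊤ ↔ x = 0)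
    (hordmul : ∀ x y : E, ord (x * y) = ord x + ord y)
    (hordadd : ∀ x y : E, min (ord x) (ord y) ≤ ord (x + y))
    (hordext : ∀ x : ℚ_[p], x ≠ 0 →
      ord (algebraMap ℚ_[p] E x) = ((x.valuation : ℝ) : WithTop ℝ))
    (OE : Subring E) (hOE : ∀ x : E, x ∈ OE ↔ 0 ≤ ord x)
    -- the unique extension of ord to an algebraic closure of E
    (ordbar : AlgebraicClosure E → WithTop ℝ)
    (hordbar0 : ∀ x, ordbar x = ⊤ ↔ x = 0)
    (hordbarmul : ∀ x y, ordbar (x * y) = ordbar x + ordbar y)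
    (hordbaradd : ∀ x y, min (ordbar x) (ordbar y) ≤ ordbar (x + y))
    (hordbarext : ∀ x : E, ordbar (algebraMap E (AlgebraicClosure E) x) = ord x)
    -- the data
    (a : ℕ) (ha : 1 ≤ a) (k : Fin a → ℕ)
    (A : Fin a → Matrix (Fin 2) (Fin 2) E)
    (hAint : ∀ j i i', A j i i' ∈ OE)
    (hAinv : ∀ j, ∃ Ainv : Matrix (Fin 2) (Fin 2) E,
      (∀ i i', Ainv i i' ∈ OE) ∧ A j * Ainv = 1 ∧ Ainv * A j = 1) :
    -- (a) ⟺ (b), with P and t written out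
    ((∃ (lam : AlgebraicClosure E) (J : Finset (Fin a)),
        Polynomial.aeval lam
          (Matrix.charpoly
            ((List.ofFn fun j : Fin a =>
              A j * Matrix.diagonal ![(p : E) ^ (k j), 1]).prod)) = 0 ∧
        ordbar lam = (((∑ j ∈ J, k j : ℕ) : ℝ) : WithTop ℝ))
      ↔
      ((((((∑ j, k j : ℕ) : ℝ) / 2 : ℝ) : WithTop ℝ) <
          ord (Matrix.trace
            ((List.ofFn fun j : Fin a =>
              A j * Matrix.diagonal ![(p : E) ^ (k j), 1]).prod)) ∧
        ∃ J : Finset (Fin a),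
          (((∑ j, k j : ℕ) : ℝ) / 2 : ℝ) = ((∑ j ∈ J, k j : ℕ) : ℝ))
      ∨
        (ord (Matrix.trace
            ((List.ofFn fun j : Fin a =>
              A j * Matrix.diagonal ![(p : E) ^ (k j), 1]).prod)) ≤
          ((((∑ j, k j : ℕ) : ℝ) / 2 : ℝ) : WithTop ℝ) ∧
        ∃ J : Finset (Fin a),
          ord (Matrix.trace
            ((List.ofFn fun j : Fin a =>
              A j * Matrix.diagonal ![(p : E) ^ (k j), 1]).prod)) =
            (((∑ j ∈ J, k j : ℕ) : ℝ) : WithTop ℝ)))) :=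
  stmt18_general p E ord hord0 hordmul hordadd hordext OE hOE ordbar hordbar0 hordbarmul hordbaradd
    hordbarext a k A hAint hAinv
end

section
/- Let a ≥ 1, and for each j ∈ Z/aZ let k_j > 0 be an integer, Δ_j := diag(p^{k_j}, 1), and v_j, v'_j ∈ O_E. Set A_j := [[0, −1],[1, v_j]] and A'_j := [[0, −1],[1, v'_j]] in GL_2(O_E). Let 𝒫 denote the group of upper-triangular 2×2 matrices over O_E whose diagonal entries are units of O_E, and for C ∈ 𝒫 put C^♭ := Δ_j·C·Δ_j^{−1}, which again lies in 𝒫. Then there exist matrices C_j ∈ 𝒫 (j ∈ Z/aZ) with A'_j = C_{j−1}^{−1}·A_j·(Δ_j·C_j·Δ_j^{−1}) for all j ∈ Z/aZ if and only if: when a is odd, v_j = v'_j for all j; and when a is even, there exists a unit w ∈ O_E^× such that v_j = w^{(−1)^j}·v'_j for all j. -/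
/-!
Multiplying out the inverses, the relation reads `C_{j-1} A'_j Δ_j = A_j Δ_j C_j`. Comparing
entries (using `p^{k_j} ≠ 0`) shows that every `C_j` is diagonal, `C_j = diag(x_j, x_{j+1})`,
with `x_{j+2} = x_j` and `x_j v'_j = v_j x_{j+1}`; conversely such units `x_j` give the `C_j`.
A `2`-periodic function on `ℤ/aℤ` is constant when `a` is odd, forcing `v = v'`, and alternates
between `x_0` and `x_1` when `a` is even, giving `w = x_0 / x_1`.
-/

open Matrix

theorem ZMod.even_val_iff_castHom_eq_zero {a : ℕ} [NeZero a] (ha : 2 ∣ a) (j : ZMod a) :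
    Even j.val ↔ ZMod.castHom ha (ZMod 2) j = 0 := by
  rw [ZMod.castHom_apply, ZMod.cast_eq_val, ZMod.natCast_eq_zero_iff_even]

theorem ZMod.even_val_add_one_iff {a : ℕ} [NeZero a] (ha : Even a) (j : ZMod a) :
    Even (j + 1).val ↔ ¬ Even j.val := by
  rw [even_iff_two_dvd] at ha
  simp only [ZMod.even_val_iff_castHom_eq_zero ha, map_add, map_one]
  generalize ZMod.castHom ha (ZMod 2) j = z
  revert z; decide

theorem apply_natCast_of_add_two {R α : Type*} [AddMonoidWithOne R] {f : R → α}
    (hf : ∀ j, f (j + 2) = f j) (n : ℕ) : f n = if Even n then f 0 else f 1 := by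
  induction n using Nat.twoStepInduction with
  | zero => simp
  | one => simp
  | more n ih _ => rw [Nat.cast_add, Nat.cast_ofNat, hf, ih]; simp [Nat.even_add]

theorem ZMod.apply_eq_ite_of_add_two {a : ℕ} [NeZero a] {α : Type*} {f : ZMod a → α}
    (hf : ∀ j, f (j + 2) = f j) (j : ZMod a) : f j = if Even j.val then f 0 else f 1 := by
  rw [← apply_natCast_of_add_two hf, ZMod.natCast_zmod_val]

theorem ZMod.apply_eq_apply_zero_of_add_two {a : ℕ} [NeZero a] (ha : Odd a) {α : Type*}
    {f : ZMod a → α} (hf : ∀ j, f (j + 2) = f j) (j : ZMod a) : f j = f 0 := by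
  have h10 : f 1 = f 0 := by
    simpa [Nat.not_even_iff_odd.2 ha] using (apply_natCast_of_add_two hf a).symm
  rw [ZMod.apply_eq_ite_of_add_two hf j, h10, ite_self]

theorem Matrix.eq_nonsing_inv_mul_mul_conj_iff {n K : Type*} [Fintype n] [DecidableEq n]
    [CommRing K] {C D : Matrix n n K} (hC : IsUnit C.det) (hD : IsUnit D.det)
    (A X C' : Matrix n n K) :
    X = C⁻¹ * A * (D * C' * D⁻¹) ↔ C * X * D = A * D * C' := by
  constructor
  · rintro rfl
    simp only [Matrix.mul_assoc, Matrix.mul_nonsing_inv_cancel_left _ _ hC,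
      Matrix.nonsing_inv_mul _ hD, Matrix.mul_one]
  · intro h
    calc X = C⁻¹ * (C * X * D) * D⁻¹ := by
          simp only [Matrix.mul_assoc, Matrix.nonsing_inv_mul_cancel_left _ _ hC,
            Matrix.mul_nonsing_inv _ hD, Matrix.mul_one]
      _ = _ := by rw [h]; simp only [Matrix.mul_assoc]

theorem Matrix.mul_companion_mul_diagonal_eq_iff {K : Type*} [Field K] {t : K} (ht : t ≠ 0)
    {C C' : Matrix (Fin 2) (Fin 2) K} (hC : C 1 0 = 0) (hC' : C' 1 0 = 0) (v v' : K) :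
    C * !![0, -1; 1, v'] * diagonal ![t, 1] = !![0, -1; 1, v] * diagonal ![t, 1] * C' ↔
      C 0 1 = 0 ∧ C 0 0 = C' 1 1 ∧ C 1 1 = C' 0 0 ∧ C 1 1 * v' = t * C' 0 1 + v * C' 1 1 := by
  simp only [diagonal_fin_two, ← Matrix.ext_iff, Fin.forall_fin_two, mul_apply,
    Fin.sum_univ_two, of_apply, cons_val', cons_val_zero, cons_val_one, cons_val_fin_one, hC, hC']
  grind

section Borel

variable {K : Type*} [Field K] (O : Subring K)

def IsUnitIn (x : K) : Prop := x ≠ 0 ∧ x ∈ O ∧ x⁻¹ ∈ O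

variable {O}

theorem isUnitIn_one : IsUnitIn O 1 := ⟨one_ne_zero, O.one_mem, by rw [inv_one]; exact O.one_mem⟩

theorem IsUnitIn.inv {x : K} (hx : IsUnitIn O x) : IsUnitIn O x⁻¹ :=
  ⟨inv_ne_zero hx.1, hx.2.2, by simpa using hx.2.1⟩

theorem IsUnitIn.mul {x y : K} (hx : IsUnitIn O x) (hy : IsUnitIn O y) : IsUnitIn O (x * y) :=
  ⟨mul_ne_zero hx.1 hy.1, O.mul_mem hx.2.1 hy.2.1, by
    rw [mul_inv]; exact O.mul_mem hx.2.2 hy.2.2⟩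

theorem IsUnitIn.of_mul_eq_one {x u : K} (hx : x ∈ O) (hu : u ∈ O) (h : x * u = 1) :
    IsUnitIn O x := by
  refine ⟨left_ne_zero_of_mul_eq_one h, hx, ?_⟩
  rwa [inv_eq_of_mul_eq_one_right h]

variable (O)

-- `C ∈ 𝒫`: the Borel subgroup of `GL₂(O)`.
def Matrix.IsBorel (C : Matrix (Fin 2) (Fin 2) K) : Prop :=
  (∀ i i', C i i' ∈ O) ∧ C 1 0 = 0 ∧ (∃ u ∈ O, C 0 0 * u = 1) ∧ (∃ u ∈ O, C 1 1 * u = 1)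

variable {O}

theorem Matrix.IsBorel.isUnitIn_zero_zero {C : Matrix (Fin 2) (Fin 2) K} (hC : C.IsBorel O) :
    IsUnitIn O (C 0 0) :=
  let ⟨_, hu, h⟩ := hC.2.2.1; .of_mul_eq_one (hC.1 0 0) hu h

theorem Matrix.IsBorel.isUnitIn_one_one {C : Matrix (Fin 2) (Fin 2) K} (hC : C.IsBorel O) :
    IsUnitIn O (C 1 1) :=
  let ⟨_, hu, h⟩ := hC.2.2.2; .of_mul_eq_one (hC.1 1 1) hu h

theorem Matrix.IsBorel.isUnit_det {C : Matrix (Fin 2) (Fin 2) K} (hC : C.IsBorel O) :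
    IsUnit C.det := by
  rw [Matrix.det_fin_two, hC.2.1, mul_zero, sub_zero, isUnit_iff_ne_zero]
  exact mul_ne_zero hC.isUnitIn_zero_zero.1 hC.isUnitIn_one_one.1

theorem Matrix.isBorel_diagonal {x y : K} (hx : IsUnitIn O x) (hy : IsUnitIn O y) :
    (diagonal ![x, y]).IsBorel O := by
  refine ⟨fun i i' => ?_, rfl, ⟨x⁻¹, hx.2.2, by simp [hx.1]⟩, ⟨y⁻¹, hy.2.2, by simp [hy.1]⟩⟩
  fin_cases i <;> fin_cases i' <;> simp [hx.2.1, hy.2.1]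

theorem Matrix.IsBorel.eq_inv_mul_companion_mul_conj_iff {t : K} (ht : t ≠ 0)
    {C C' : Matrix (Fin 2) (Fin 2) K} (hC : C.IsBorel O) (hC' : C'.IsBorel O) (v v' : K) :
    !![0, -1; 1, v'] = C⁻¹ * !![0, -1; 1, v] * (diagonal ![t, 1] * C' * (diagonal ![t, 1])⁻¹) ↔
      C 0 1 = 0 ∧ C 0 0 = C' 1 1 ∧ C 1 1 = C' 0 0 ∧ C 1 1 * v' = t * C' 0 1 + v * C' 1 1 := by
  have hD : IsUnit (diagonal ![t, 1]).det := by simp [isUnit_iff_ne_zero, ht]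
  rw [eq_nonsing_inv_mul_mul_conj_iff hC.isUnit_det hD,
    mul_companion_mul_diagonal_eq_iff ht hC.2.1 hC'.2.1]

end Borel

section Twist

variable {R K : Type*} [Field K] (O : Subring K)

def PeriodicUnitTwist [AddMonoidWithOne R] (v v' : R → K) : Prop :=
  ∃ x : R → K, (∀ j, IsUnitIn O (x j)) ∧ (∀ j, x (j + 2) = x j) ∧
    ∀ j, x j * v' j = v j * x (j + 1)

theorem exists_isBorel_conj_iff_periodicUnitTwist [AddGroupWithOne R] {t : R → K}
    (ht : ∀ j, t j ≠ 0) (v v' : R → K) :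
    (∃ C : R → Matrix (Fin 2) (Fin 2) K, (∀ j, (C j).IsBorel O) ∧
      ∀ j, !![0, -1; 1, v' j] =
        (C (j - 1))⁻¹ * !![0, -1; 1, v j] * (diagonal ![t j, 1] * C j * (diagonal ![t j, 1])⁻¹))
      ↔ PeriodicUnitTwist O v v' := by
  constructor
  · rintro ⟨C, hC, hrel⟩
    have h j : C j 0 1 = 0 ∧ C j 0 0 = C (j + 1) 1 1 ∧ C j 1 1 = C (j + 1) 0 0 ∧
        C j 1 1 * v' (j + 1) = t (j + 1) * C (j + 1) 0 1 + v (j + 1) * C (j + 1) 1 1 := by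
      refine ((hC j).eq_inv_mul_companion_mul_conj_iff (ht (j + 1)) (hC (j + 1)) _ _).1 ?_
      simpa using hrel (j + 1)
    refine ⟨fun j => C j 0 0, fun j => (hC j).isUnitIn_zero_zero, fun j => ?_, fun j => ?_⟩
    · calc C (j + 2) 0 0 = C (j + 1 + 1) 0 0 := by rw [add_assoc, one_add_one_eq_two]
        _ = C j 0 0 := by rw [← (h (j + 1)).2.2.1, (h j).2.1]
    · have hprev := (h (j - 1)).2.2
      simp only [sub_add_cancel] at hprev
      show C j 0 0 * v' j = v j * C (j + 1) 0 0
      rw [← hprev.1, hprev.2, (h j).1, (h j).2.2.1]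
      ring
  · rintro ⟨x, hx, hper, hrel⟩
    refine ⟨fun j => diagonal ![x j, x (j + 1)],
      fun j => isBorel_diagonal (hx j) (hx (j + 1)), fun j => ?_⟩
    rw [(isBorel_diagonal (hx _) (hx _)).eq_inv_mul_companion_mul_conj_iff (ht j)
      (isBorel_diagonal (hx _) (hx _))]
    obtain ⟨i, rfl⟩ : ∃ i, j = i + 1 := ⟨j - 1, (sub_add_cancel j 1).symm⟩
    simp [add_assoc, one_add_one_eq_two, hper, hrel]

end Twist

section ZMod

variable {K : Type*} [Field K] {O : Subring K} {a : ℕ} [NeZero a] {v v' : ZMod a → K}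

theorem periodicUnitTwist_iff_of_odd (ha : Odd a) :
    PeriodicUnitTwist O v v' ↔ ∀ j, v j = v' j := by
  constructor
  · rintro ⟨x, hx, hper, hrel⟩ j
    have hrel := hrel j
    rw [ZMod.apply_eq_apply_zero_of_add_two ha hper j,
      ZMod.apply_eq_apply_zero_of_add_two ha hper (j + 1), mul_comm] at hrel
    exact (mul_right_cancel₀ (hx 0).1 hrel).symm
  · intro h
    exact ⟨1, fun _ => isUnitIn_one, fun _ => rfl, fun j => by simp [h]⟩

theorem periodicUnitTwist_iff_of_even (ha : Even a) :
    PeriodicUnitTwist O v v' ↔ ∃ w : K, w ≠ 0 ∧ w ∈ O ∧ w⁻¹ ∈ O ∧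
      ∀ j : ZMod a, v j = (if Even (ZMod.val j) then w else w⁻¹) * v' j := by
  constructor
  · rintro ⟨x, hx, hper, hrel⟩
    obtain ⟨hw0, hwO, hwO'⟩ := (hx 0).mul (hx 1).inv
    refine ⟨x 0 * (x 1)⁻¹, hw0, hwO, hwO', fun j => ?_⟩
    have hrel := hrel j
    rw [ZMod.apply_eq_ite_of_add_two hper j, ZMod.apply_eq_ite_of_add_two hper (j + 1)] at hrel
    simp only [ZMod.even_val_add_one_iff ha] at hrel
    have hx0 := (hx 0).1
    have hx1 := (hx 1).1
    split_ifs at hrel ⊢ <;> field_simp <;> linear_combination -hrel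
  · rintro ⟨w, hw0, hwO, hwO', hv⟩
    have hw : IsUnitIn O w := ⟨hw0, hwO, hwO'⟩
    refine ⟨fun j => if Even j.val then w else 1, fun j => ?_, fun j => ?_, fun j => ?_⟩ <;>
      dsimp only
    · split_ifs
      exacts [hw, isUnitIn_one]
    · simp only [← one_add_one_eq_two, ← add_assoc, ZMod.even_val_add_one_iff ha, not_not]
    · simp only [ZMod.even_val_add_one_iff ha, hv j]
      split_ifs <;> field_simp

theorem periodicUnitTwist_iff :
    PeriodicUnitTwist O v v' ↔ (Odd a → ∀ j, v j = v' j) ∧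
      (Even a → ∃ w : K, w ≠ 0 ∧ w ∈ O ∧ w⁻¹ ∈ O ∧
        ∀ j : ZMod a, v j = (if Even (ZMod.val j) then w else w⁻¹) * v' j) := by
  rcases Nat.even_or_odd a with ha | ha
  · simp [periodicUnitTwist_iff_of_even ha, ha, Nat.not_odd_iff_even.2 ha]
  · simp [periodicUnitTwist_iff_of_odd ha, ha, Nat.not_even_iff_odd.2 ha]

end ZMod

theorem stmt19_general
    (p : ℕ) [Fact (Nat.Prime p)]
    (E : Type*) [Field E] [Algebra ℚ_[p] E]
    (OE : Subring E)
    (a : ℕ) [NeZero a]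
    (k : ZMod a → ℕ)
    (v v' : ZMod a → E) :
    -- existence of (C_j) in the parabolic group conjugating (A_j) to (A'_j) …
    (∃ C : ZMod a → Matrix (Fin 2) (Fin 2) E,
      (∀ j, (∀ i i', C j i i' ∈ OE) ∧ C j 1 0 = 0 ∧
        (∃ u ∈ OE, C j 0 0 * u = 1) ∧ (∃ u ∈ OE, C j 1 1 * u = 1)) ∧
      (∀ j : ZMod a,
        !![0, -1; 1, v' j] =
          (C (j - 1))⁻¹ * !![0, -1; 1, v j] *
            (Matrix.diagonal ![(p : E) ^ (k j), 1] * C j *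
              (Matrix.diagonal ![(p : E) ^ (k j), 1])⁻¹)))
    ↔
    -- … iff v ∼_k v'
    ((Odd a → ∀ j, v j = v' j) ∧
     (Even a → ∃ w : E, w ≠ 0 ∧ w ∈ OE ∧ w⁻¹ ∈ OE ∧
        ∀ j : ZMod a, v j = (if Even (ZMod.val j) then w else w⁻¹) * v' j)) := by
  have : CharZero E := charZero_of_injective_algebraMap (algebraMap ℚ_[p] E).injective
  have hp : ∀ j, (p : E) ^ k j ≠ 0 := fun j =>
    pow_ne_zero _ (Nat.cast_ne_zero.2 (Fact.out : p.Prime).ne_zero)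
  exact (exists_isBorel_conj_iff_periodicUnitTwist OE hp v v').trans periodicUnitTwist_iff

theorem stmt19
    (p : ℕ) [Fact (Nat.Prime p)]
    (E : Type*) [Field E] [Algebra ℚ_[p] E] [FiniteDimensional ℚ_[p] E]
    (ord : E → WithTop ℝ)
    (hord0 : ∀ x : E, ord x = ⊤ ↔ x = 0)
    (hordmul : ∀ x y : E, ord (x * y) = ord x + ord y)
    (hordadd : ∀ x y : E, min (ord x) (ord y) ≤ ord (x + y))
    (hordext : ∀ x : ℚ_[p], x ≠ 0 →
      ord (algebraMap ℚ_[p] E x) = ((x.valuation : ℝ) : WithTop ℝ))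
    (OE : Subring E) (hOE : ∀ x : E, x ∈ OE ↔ 0 ≤ ord x)
    (a : ℕ) [NeZero a]
    (k : ZMod a → ℕ) (hk : ∀ j, 0 < k j)
    (v v' : ZMod a → E) (hv : ∀ j, v j ∈ OE) (hv' : ∀ j, v' j ∈ OE) :
    -- existence of (C_j) in the parabolic group conjugating (A_j) to (A'_j) …
    (∃ C : ZMod a → Matrix (Fin 2) (Fin 2) E,
      (∀ j, (∀ i i', C j i i' ∈ OE) ∧ C j 1 0 = 0 ∧
        (∃ u ∈ OE, C j 0 0 * u = 1) ∧ (∃ u ∈ OE, C j 1 1 * u = 1)) ∧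
      (∀ j : ZMod a,
        !![0, -1; 1, v' j] =
          (C (j - 1))⁻¹ * !![0, -1; 1, v j] *
            (Matrix.diagonal ![(p : E) ^ (k j), 1] * C j *
              (Matrix.diagonal ![(p : E) ^ (k j), 1])⁻¹)))
    ↔
    -- … iff v ∼_k v'
    ((Odd a → ∀ j, v j = v' j) ∧
     (Even a → ∃ w : E, w ≠ 0 ∧ w ∈ OE ∧ w⁻¹ ∈ OE ∧
        ∀ j : ZMod a, v j = (if Even (ZMod.val j) then w else w⁻¹) * v' j)) :=
  stmt19_general p E OE a k v v'
end
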